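/- arXiv:1608.01040 — 8 statements merged into one kernel-verified Lean document; each statement's English description precedes it below -/
import Mathlib

section
/- If a hypergraph H = (V,E) admits an Euler family, then |E| ≤ Σ_{v ∈ V} ⌊deg(v)/2⌋. -/
open Finset

/-- The cyclically-next index in `Fin n`. -/
def nxt {n : ℕ} (i : Fin n) : Fin n := ⟨(i.1 + 1) % n, Nat.mod_lt _ i.pos⟩

/-- A closed strict trail `v₀ e₀ v₁ e₁ … v_{n-1} e_{n-1} v₀` in the hypergraph whose
edges are given by the family `E` (indexed by `ι`, so parallel edges are allowed):
a closed walk of length `n ≥ 2` with consecutive anchor vertices distinct,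
each `vᵢ, v_{i+1} ∈ eᵢ`, and pairwise distinct edges. -/
structure CST {V ι : Type} (E : ι → Finset V) where
  n : ℕ
  hn : 2 ≤ n
  vert : Fin n → V
  edge : Fin n → ι
  mem_left : ∀ i, vert i ∈ E (edge i)
  mem_right : ∀ i, vert (nxt i) ∈ E (edge i)
  ne_next : ∀ i, vert i ≠ vert (nxt i)
  edge_inj : Function.Injective edge

/-- An Euler family: a finite family of pairwise anchor-disjoint closed strict trails
such that every edge of the hypergraph lies in exactly one trail. -/
def HasEulerFamily {V ι : Type} (E : ι → Finset V) : Prop :=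
  ∃ (m : ℕ) (T : Fin m → CST E),
    (∀ e : ι, ∃ k i, (T k).edge i = e) ∧
    (∀ k k' i i', (T k).edge i = (T k').edge i' → k = k') ∧
    (∀ k k' i i', (T k).vert i = (T k').vert i' → k = k')

/-- An Euler tour: a single closed strict trail traversing every edge (exactly once). -/
def HasEulerTour {V ι : Type} (E : ι → Finset V) : Prop :=
  ∃ T : CST E, Function.Surjective T.edge

/-- The degree of a vertex: the number of edges containing it. -/
def hdeg {V ι : Type} [Fintype ι] [DecidableEq V] (E : ι → Finset V) (v : V) : ℕ :=
  (Finset.univ.filter fun e => v ∈ E e).card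

/-- The skeleton graph of the hypergraph: two distinct vertices are adjacent
iff they lie in a common edge.  Walk-connectivity in the hypergraph coincides with
connectivity in the skeleton. -/
def skeleton {V ι : Type} (E : ι → Finset V) : SimpleGraph V where
  Adj u w := u ≠ w ∧ ∃ e, u ∈ E e ∧ w ∈ E e
  symm := ⟨fun u w h => ⟨h.1.symm, h.2.imp fun _ he => ⟨he.2, he.1⟩⟩⟩
  loopless := ⟨fun _ h => h.1 rfl⟩

/-- The number of connected components of the hypergraph. -/
noncomputable def ccCount {V ι : Type} (E : ι → Finset V) : ℕ :=
  Nat.card (skeleton E).ConnectedComponent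

/-!
Every edge is traversed exactly once, so `|E|` is the total number of passages of the trails
through their anchor vertices. A passage through `v` enters and leaves `v` along two distinct
edges containing `v`, and distinct passages use distinct edges, so `v` carries at most
`⌊deg(v)/2⌋` passages.
-/

def prv {n : ℕ} (i : Fin n) : Fin n := ⟨(i.1 + (n - 1)) % n, Nat.mod_lt _ i.pos⟩

lemma nxt_prv {n : ℕ} (i : Fin n) : nxt (prv i) = i := by
  rcases i with ⟨i, hi⟩
  simp only [nxt, prv, Fin.mk.injEq, Nat.mod_add_mod]
  rw [show i + (n - 1) + 1 = i + n by omega, Nat.add_mod_right, Nat.mod_eq_of_lt hi]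

lemma prv_injective {n : ℕ} : Function.Injective (prv (n := n)) :=
  Function.LeftInverse.injective nxt_prv

namespace CST

variable {V ι : Type} {E : ι → Finset V}

lemma vert_mem_edge_prv (T : CST E) (i : Fin T.n) : T.vert i ∈ E (T.edge (prv i)) := by
  simpa only [nxt_prv] using T.mem_right (prv i)

lemma vert_prv_ne (T : CST E) (i : Fin T.n) : T.vert (prv i) ≠ T.vert i := by
  simpa only [nxt_prv] using T.ne_next (prv i)

end CST

section Passages

variable {V ι S : Type} [Fintype ι] [DecidableEq V] (E : ι → Finset V)
  (edge : S → ι) (vert : S → V) (pred : S → S)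

/-- `S` is a set of passages: passage `s` sits at `vert s`, leaves along `edge s` and is entered
along `edge (pred s)`. -/
lemma two_mul_card_passages_le_hdeg [Fintype S] (hedge : Function.Injective edge)
    (hpred : Function.Injective pred) (hleave : ∀ s, vert s ∈ E (edge s))
    (henter : ∀ s, vert s ∈ E (edge (pred s))) (hne : ∀ s, vert (pred s) ≠ vert s) (v : V) :
    2 * #{s | vert s = v} ≤ hdeg E v := by
  classical
  set A : Finset S := {s | vert s = v}
  have hsub : ∀ f : S → ι, (∀ s, vert s ∈ E (f s)) → A.image f ⊆ ({e | v ∈ E e} : Finset ι) := by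
    intro f hf e he
    obtain ⟨s, hs, rfl⟩ := mem_image.mp he
    simpa [(mem_filter.mp hs).2] using hf s
  have hdisj : Disjoint (A.image edge) (A.image (edge ∘ pred)) := by
    refine disjoint_left.mpr fun e he he' => ?_
    obtain ⟨s, hs, rfl⟩ := mem_image.mp he
    obtain ⟨t, ht, hts⟩ := mem_image.mp he'
    have hst : pred t = s := hedge hts
    exact hne t (by rw [hst, (mem_filter.mp hs).2, (mem_filter.mp ht).2])
  calc 2 * #A = #(A.image edge ∪ A.image (edge ∘ pred)) := by
        rw [card_union_of_disjoint hdisj, card_image_of_injective _ hedge,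
          card_image_of_injective _ (hedge.comp hpred), two_mul]
    _ ≤ hdeg E v := card_le_card (union_subset (hsub _ hleave) (hsub _ henter))

lemma card_passages_le_sum_hdeg_div_two [Fintype V] [Fintype S]
    (hedge : Function.Injective edge) (hpred : Function.Injective pred)
    (hleave : ∀ s, vert s ∈ E (edge s)) (henter : ∀ s, vert s ∈ E (edge (pred s)))
    (hne : ∀ s, vert (pred s) ≠ vert s) :
    Fintype.card S ≤ ∑ v : V, hdeg E v / 2 := by
  rw [← card_univ, card_eq_sum_card_fiberwise fun s _ => mem_univ (vert s)]
  refine sum_le_sum fun v _ => (Nat.le_div_iff_mul_le two_pos).mpr ?_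
  rw [mul_comm]
  exact two_mul_card_passages_le_hdeg E edge vert pred hedge hpred hleave henter hne v

end Passages

theorem stmt1_general {V ι : Type} [Fintype V] [Fintype ι] [DecidableEq V]
    (E : ι → Finset V) (h : HasEulerFamily E) :
    Fintype.card ι ≤ ∑ v : V, hdeg E v / 2 := by
  obtain ⟨m, T, hcover, hsame, -⟩ := h
  let edge : ((k : Fin m) × Fin (T k).n) → ι := fun s => (T s.1).edge s.2
  have hedge : Function.Injective edge := by
    rintro ⟨k, i⟩ ⟨k', i'⟩ hii'
    obtain rfl := hsame k k' i i' hii'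
    obtain rfl := (T k).edge_inj hii'
    rfl
  let pred : ((k : Fin m) × Fin (T k).n) → (k : Fin m) × Fin (T k).n := Sigma.map id fun _ => prv
  have hpred : Function.Injective pred := Function.injective_id.sigma_map fun _ => prv_injective
  calc Fintype.card ι ≤ Fintype.card ((k : Fin m) × Fin (T k).n) :=
        Fintype.card_le_of_surjective edge fun e => by
          obtain ⟨k, i, hki⟩ := hcover e
          exact ⟨⟨k, i⟩, hki⟩
    _ ≤ ∑ v : V, hdeg E v / 2 :=
        card_passages_le_sum_hdeg_div_two E edge (fun s => (T s.1).vert s.2) pred hedge hpred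
          (fun s => (T s.1).mem_left s.2) (fun s => (T s.1).vert_mem_edge_prv s.2)
          (fun s => (T s.1).vert_prv_ne s.2)

/-- If a hypergraph admits an Euler family, then
`|E| ≤ Σ_{v ∈ V} ⌊deg(v)/2⌋`. -/
theorem stmt1 {V ι : Type} [Fintype V] [Fintype ι] [DecidableEq V] [Nonempty V]
    (E : ι → Finset V) (h : HasEulerFamily E) :
    Fintype.card ι ≤ ∑ v : V, hdeg E v / 2 :=
  stmt1_general E h
end

section
/- Every edge of a hypergraph that admits an Euler family contains at least two vertices of degree at least 2. -/
open Finset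

lemma nxt_val {n : ℕ} (i : Fin n) : (nxt i : ℕ) = if (i : ℕ) + 1 = n then 0 else (i : ℕ) + 1 := by
  have := i.isLt
  split_ifs with h
  · simp [nxt, h]
  · exact Nat.mod_eq_of_lt (by omega)

lemma nxt_injective {n : ℕ} : Function.Injective (nxt : Fin n → Fin n) := by
  intro i j hij
  have hval := congrArg Fin.val hij
  rw [nxt_val, nxt_val] at hval
  ext
  split_ifs at hval <;> omega

lemma nxt_surjective {n : ℕ} : Function.Surjective (nxt : Fin n → Fin n) :=
  Finite.injective_iff_surjective.mp nxt_injective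

lemma two_le_hdeg_of_mem_of_mem {V ι : Type} [Fintype ι] [DecidableEq V] {E : ι → Finset V}
    {v : V} {e e' : ι} (hne : e ≠ e') (he : v ∈ E e) (he' : v ∈ E e') : 2 ≤ hdeg E v :=
  one_lt_card_iff.mpr ⟨e, e', by simpa using he, by simpa using he', hne⟩

namespace CST

variable {V ι : Type} [Fintype ι] [DecidableEq V] {E : ι → Finset V}

/-- An anchor lies in the edge leaving it and in the edge entering it; these differ because
the trail moves on (`ne_next`) and its edges are distinct. -/
lemma two_le_hdeg_vert (T : CST E) (i : Fin T.n) : 2 ≤ hdeg E (T.vert i) := by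
  obtain ⟨p, rfl⟩ := nxt_surjective i
  have hp : p ≠ nxt p := fun h => T.ne_next p (congrArg T.vert h)
  exact two_le_hdeg_of_mem_of_mem (T.edge_inj.ne hp) (T.mem_right p) (T.mem_left (nxt p))

lemma two_le_card_filter_two_le_hdeg_edge (T : CST E) (i : Fin T.n) :
    2 ≤ ((E (T.edge i)).filter fun v => 2 ≤ hdeg E v).card :=
  one_lt_card_iff.mpr ⟨T.vert i, T.vert (nxt i),
    mem_filter.mpr ⟨T.mem_left i, T.two_le_hdeg_vert i⟩,
    mem_filter.mpr ⟨T.mem_right i, T.two_le_hdeg_vert (nxt i)⟩, T.ne_next i⟩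

end CST

theorem stmt4_general {V ι : Type} [Fintype ι] [DecidableEq V]
    (E : ι → Finset V) (h : HasEulerFamily E) :
    ∀ e : ι, 2 ≤ ((E e).filter fun v => 2 ≤ hdeg E v).card := by
  intro e
  obtain ⟨m, T, hcover, -, -⟩ := h
  obtain ⟨k, i, rfl⟩ := hcover e
  exact (T k).two_le_card_filter_two_le_hdeg_edge i

/-- Every edge of a hypergraph that admits an Euler family contains
at least two vertices of degree at least 2. -/
theorem stmt4 {V ι : Type} [Fintype ι] [DecidableEq V] [Nonempty V]
    (E : ι → Finset V) (h : HasEulerFamily E) :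
    ∀ e : ι, 2 ≤ ((E e).filter fun v => 2 ≤ hdeg E v).card :=
  stmt4_general E h
end

section
/- If e is a strong cut edge of a hypergraph H (that is, deleting e increases the number of connected components by exactly |e| − 1), then H does not admit an Euler family. -/
open Finset

/-!
Going round a closed strict trail through `e` the other way connects two distinct vertices of `e`
in `H − e`. Deleting `e` only splits the component of `H` containing `e`, into the components
of `H − e` that meet `e`; so `cc(H − e) + 1 ≤ cc(H) + #{components of H − e meeting e}`, and the
last number is at most `|e| − 1` once two vertices of `e` share a component of `H − e`.
-/

open SimpleGraph

section Cycle

variable {V : Type} {G : SimpleGraph V}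

lemma reachable_nxt_of_forall_adj {n : ℕ} (f : Fin n → V) (i₀ : Fin n)
    (hadj : ∀ j, j ≠ i₀ → G.Adj (f j) (f (nxt j))) :
    G.Reachable (f (nxt i₀)) (f i₀) := by
  have hn : 0 < n := i₀.pos
  let idx (k : ℕ) : Fin n := ⟨(i₀ + 1 + k) % n, Nat.mod_lt _ hn⟩
  have nxt_idx (k : ℕ) : nxt (idx k) = idx (k + 1) := by
    ext; simp only [nxt, idx, Nat.mod_add_mod, Nat.add_assoc]
  have idx_ne (k : ℕ) (hk : k + 1 < n) : idx k ≠ i₀ := by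
    intro h
    have h' : (i₀ + 1 + k) % n = i₀ := congrArg Fin.val h
    rcases lt_or_ge (i₀ + 1 + k) n with hlt | hge
    · rw [Nat.mod_eq_of_lt hlt] at h'; omega
    · rw [Nat.mod_eq_sub_mod hge, Nat.mod_eq_of_lt (by omega)] at h'; omega
  have reach (k : ℕ) (hk : k < n) : G.Reachable (f (idx 0)) (f (idx k)) := by
    induction k with
    | zero => rfl
    | succ k ih => exact (ih (by omega)).trans (nxt_idx k ▸ (hadj _ (idx_ne k hk)).reachable)
  have idx_zero : idx 0 = nxt i₀ := rfl
  have idx_last : idx (n - 1) = i₀ := by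
    ext; simp only [idx, show i₀ + 1 + (n - 1) = i₀ + n by omega, Nat.add_mod_right,
      Nat.mod_eq_of_lt i₀.2]
  simpa only [idx_zero, idx_last] using reach (n - 1) (by omega)

end Cycle

section DeleteEdge

variable {V ι : Type} (E : ι → Finset V) (e : ι)

abbrev deleteEdge : {i : ι // i ≠ e} → Finset V := fun i => E i

lemma skeleton_deleteEdge_le : skeleton (deleteEdge E e) ≤ skeleton E :=
  fun _ _ ⟨hne, i, hi⟩ => ⟨hne, i, hi⟩

variable {E e}

lemma reachable_deleteEdge_or_of_reachable {a b : V} (hab : (skeleton E).Reachable a b) :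
    (skeleton (deleteEdge E e)).Reachable a b ∨
      (∃ x ∈ E e, (skeleton (deleteEdge E e)).Reachable a x) ∧
      (∃ y ∈ E e, (skeleton (deleteEdge E e)).Reachable b y) := by
  obtain ⟨p⟩ := hab
  induction p with
  | nil => exact Or.inl (Reachable.refl _)
  | @cons a c b hadj p ih =>
    obtain ⟨hne, j, ha, hc⟩ := hadj
    by_cases hj : j = e
    · subst hj
      refine Or.inr ⟨⟨a, ha, Reachable.refl _⟩, ?_⟩
      rcases ih with h | ⟨-, hb⟩
      · exact ⟨c, hc, h.symm⟩
      · exact hb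
    · have hac : (skeleton (deleteEdge E e)).Adj a c := ⟨hne, ⟨j, hj⟩, ha, hc⟩
      rcases ih with h | ⟨⟨x, hx, hcx⟩, hb⟩
      · exact Or.inl (hac.reachable.trans h)
      · exact Or.inr ⟨⟨x, hx, hac.reachable.trans hcx⟩, hb⟩

lemma CST.reachable_deleteEdge (T : CST E) {i₀ : Fin T.n} (hi₀ : T.edge i₀ = e) :
    (skeleton (deleteEdge E e)).Reachable (T.vert (nxt i₀)) (T.vert i₀) :=
  reachable_nxt_of_forall_adj T.vert i₀ fun j hj =>
    ⟨T.ne_next j, ⟨T.edge j, fun h => hj (T.edge_inj (h.trans hi₀.symm))⟩,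
      T.mem_left j, T.mem_right j⟩

open Classical in
theorem ccCount_deleteEdge_add_one_le {u : V} (hu : u ∈ E e) :
    ccCount (deleteEdge E e) + 1 ≤
      ccCount E + #((E e).image (skeleton (deleteEdge E e)).connectedComponentMk) := by
  unfold ccCount
  set G' := skeleton (deleteEdge E e)
  set A := (E e).image G'.connectedComponentMk
  set C₀ := G'.connectedComponentMk u
  have hC₀ : C₀ ∈ A := mem_image_of_mem _ hu
  let f := ConnectedComponent.map (Hom.ofLE (skeleton_deleteEdge_le E e))
  have hf : ∀ C₁ C₂, C₁ ∉ A.erase C₀ → C₂ ∉ A.erase C₀ → f C₁ = f C₂ → C₁ = C₂ := by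
    intro C₁ C₂ h₁ h₂ hf
    induction C₁ using ConnectedComponent.ind with | h a => ?_
    induction C₂ using ConnectedComponent.ind with | h b => ?_
    have hab : (skeleton E).Reachable a b := ConnectedComponent.exact hf
    rcases reachable_deleteEdge_or_of_reachable hab with h | ⟨⟨x, hx, hax⟩, ⟨y, hy, hby⟩⟩
    · exact ConnectedComponent.sound h
    · have ha : G'.connectedComponentMk a ∈ A :=
        mem_image.2 ⟨x, hx, (ConnectedComponent.sound hax).symm⟩
      have hb : G'.connectedComponentMk b ∈ A :=
        mem_image.2 ⟨y, hy, (ConnectedComponent.sound hby).symm⟩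
      have ha₀ : G'.connectedComponentMk a = C₀ := by_contra fun hne => h₁ (mem_erase.2 ⟨hne, ha⟩)
      have hb₀ : G'.connectedComponentMk b = C₀ := by_contra fun hne => h₂ (mem_erase.2 ⟨hne, hb⟩)
      exact ha₀.trans hb₀.symm
  let g : G'.ConnectedComponent → (skeleton E).ConnectedComponent ⊕ A.erase C₀ :=
    fun C => if h : C ∈ A.erase C₀ then .inr ⟨C, h⟩ else .inl (f C)
  have hg : Function.Injective g :=
    Function.Injective.dite _ (fun _ _ h => Subtype.ext (Subtype.ext_iff.1 (Sum.inr_injective h)))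
      (fun C₁ C₂ h => Subtype.ext (hf _ _ C₁.2 C₂.2 (Sum.inl_injective h))) Sum.inr_ne_inl
  rcases finite_or_infinite (skeleton E).ConnectedComponent with hfin | hinf
  · have := Nat.card_le_card_of_injective g hg
    rw [Nat.card_sum, Nat.card_eq_finsetCard, card_erase_of_mem hC₀] at this
    have := card_pos.2 ⟨C₀, hC₀⟩
    omega
  · have : Infinite G'.ConnectedComponent :=
      .of_surjective f (ConnectedComponent.surjective_map_ofLE _)
    simp only [Nat.card_eq_zero_of_infinite, zero_add]
    exact card_pos.2 ⟨C₀, hC₀⟩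

end DeleteEdge

theorem stmt5_general {V ι : Type} (E : ι → Finset V) (e : ι)
    (hstrong : ccCount (fun i : {i : ι // i ≠ e} => E i.1) =
      ccCount E + ((E e).card - 1)) :
    ¬ HasEulerFamily E := by
  classical
  change ccCount (deleteEdge E e) = _ at hstrong
  rintro ⟨m, T, hcover, -, -⟩
  obtain ⟨k, i, hi⟩ := hcover e
  have hu : (T k).vert i ∈ E e := hi ▸ (T k).mem_left i
  have hw : (T k).vert (nxt i) ∈ E e := hi ▸ (T k).mem_right i
  have hreach := (T k).reachable_deleteEdge hi
  have hcount := ccCount_deleteEdge_add_one_le hu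
  have hmerge : #((E e).image (skeleton (deleteEdge E e)).connectedComponentMk) < #(E e) :=
    card_image_le.lt_of_ne fun h =>
      (T k).ne_next i (card_image_iff.1 h hu hw (ConnectedComponent.sound hreach.symm))
  omega

/-- If `e` is a strong cut edge of a hypergraph `H` (a cut edge with
`cc(H−e) = cc(H) + |e| − 1`), then `H` does not admit an Euler family. -/
theorem stmt5 {V ι : Type} [Nonempty V] (E : ι → Finset V) (e : ι)
    (hcut : ccCount E < ccCount (fun i : {i : ι // i ≠ e} => E i.1))
    (hstrong : ccCount (fun i : {i : ι // i ≠ e} => E i.1) =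
      ccCount E + ((E e).card - 1)) :
    ¬ HasEulerFamily E :=
  stmt5_general E e hstrong
end

section
/- Let H be a hypergraph with a cut edge e such that H − e has at least two non-trivial connected components (components containing at least one edge). Then H does not admit an Euler tour. -/
/-!
Removing the edge `e` from an Euler tour leaves a trail through every other edge, so all
edges other than `e` lie in a single connected component of `H − e`.
-/

open Finset

theorem skeleton_reachable_of_mem {V ι : Type} {E : ι → Finset V} (j : ι) {x y : V}
    (hx : x ∈ E j) (hy : y ∈ E j) : (skeleton E).Reachable x y := by
  by_cases hxy : x = y
  · exact hxy ▸ SimpleGraph.Reachable.refl x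
  · exact SimpleGraph.Adj.reachable ⟨hxy, j, hx, hy⟩

theorem SimpleGraph.reachable_of_forall_reachable_succ {V : Type} {G : SimpleGraph V}
    {F : ℕ → V} {a b : ℕ} (hab : a ≤ b)
    (h : ∀ k, a ≤ k → k < b → G.Reachable (F k) (F (k + 1))) : G.Reachable (F a) (F b) := by
  induction b, hab using Nat.le_induction with
  | base => rfl
  | succ b hab ih =>
    exact (ih fun k hak hkb => h k hak (by omega)).trans (h b hab (by omega))

theorem nxt_mk_mod {n : ℕ} (hn : 0 < n) (k : ℕ) :
    nxt (⟨k % n, Nat.mod_lt _ hn⟩ : Fin n) = ⟨(k + 1) % n, Nat.mod_lt _ hn⟩ :=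
  Fin.ext (Nat.mod_add_mod k n 1)

theorem SimpleGraph.reachable_of_cycle_erase {V : Type} {G : SimpleGraph V} {n : ℕ}
    (f : Fin n → V) (i₀ : Fin n) (h : ∀ i, i ≠ i₀ → G.Reachable (f i) (f (nxt i)))
    (i j : Fin n) : G.Reachable (f i) (f j) := by
  have hn : 0 < n := i.pos
  -- unroll the cycle as the path `F (i₀ + 1), …, F (i₀ + n)`, which avoids the step at `i₀`
  let F : ℕ → V := fun k => f ⟨k % n, Nat.mod_lt _ hn⟩
  have hF_step : ∀ k, i₀.1 + 1 ≤ k → k < i₀.1 + n → G.Reachable (F k) (F (k + 1)) := by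
    intro k hlo hhi
    have hk : (⟨k % n, Nat.mod_lt _ hn⟩ : Fin n) ≠ i₀ := by
      intro hki
      have hmod : k % n = i₀.1 := congrArg Fin.val hki
      rcases Nat.lt_or_ge k n with hkn | hkn
      · rw [Nat.mod_eq_of_lt hkn] at hmod; omega
      · rw [Nat.mod_eq_sub_mod hkn, Nat.mod_eq_of_lt (by omega)] at hmod; omega
    simpa only [F, nxt_mk_mod hn] using h _ hk
  have hF_unroll : ∀ i : Fin n, ∃ k, i₀.1 + 1 ≤ k ∧ k ≤ i₀.1 + n ∧ F k = f i := by
    intro i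
    have hi := i.isLt
    by_cases hle : i.1 ≤ i₀.1
    · refine ⟨i.1 + n, by omega, by omega, ?_⟩
      simp only [F, Nat.add_mod_right, Nat.mod_eq_of_lt hi]
    · refine ⟨i.1, by omega, by omega, ?_⟩
      simp only [F, Nat.mod_eq_of_lt hi]
  have hF_reach : ∀ k, i₀.1 + 1 ≤ k → k ≤ i₀.1 + n → G.Reachable (F (i₀.1 + 1)) (F k) :=
    fun k hlo hhi => SimpleGraph.reachable_of_forall_reachable_succ hlo
      fun m hm hmk => hF_step m hm (by omega)
  obtain ⟨k, hk₁, hk₂, hFk⟩ := hF_unroll i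
  obtain ⟨l, hl₁, hl₂, hFl⟩ := hF_unroll j
  rw [← hFk, ← hFl]
  exact (hF_reach k hk₁ hk₂).symm.trans (hF_reach l hl₁ hl₂)

theorem CST.reachable_of_edge_eq {V ι : Type} {E : ι → Finset V} (T : CST E) {e : ι}
    {i₀ : Fin T.n} (hi₀ : T.edge i₀ = e) (i j : Fin T.n) :
    (skeleton fun i : {i : ι // i ≠ e} => E i.1).Reachable (T.vert i) (T.vert j) := by
  refine SimpleGraph.reachable_of_cycle_erase T.vert i₀ (fun i hi => ?_) i j
  have hie : T.edge i ≠ e := fun h => hi (T.edge_inj (h.trans hi₀.symm))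
  exact skeleton_reachable_of_mem ⟨T.edge i, hie⟩ (T.mem_left i) (T.mem_right i)

theorem CST.reachable_of_mem_edge {V ι : Type} {E : ι → Finset V} (T : CST E) {e : ι}
    {i₀ : Fin T.n} (hi₀ : T.edge i₀ = e) (i j : Fin T.n) (hi : T.edge i ≠ e)
    (hj : T.edge j ≠ e) {x y : V} (hx : x ∈ E (T.edge i)) (hy : y ∈ E (T.edge j)) :
    (skeleton fun i : {i : ι // i ≠ e} => E i.1).Reachable x y :=
  ((skeleton_reachable_of_mem ⟨T.edge i, hi⟩ (T.mem_left i) hx).symm.trans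
    (T.reachable_of_edge_eq hi₀ i j)).trans
    (skeleton_reachable_of_mem ⟨T.edge j, hj⟩ (T.mem_left j) hy)

theorem stmt6_general {V ι : Type} (E : ι → Finset V) (e : ι)
    (hnontriv : ∃ (f g : ι), f ≠ e ∧ g ≠ e ∧ ∃ u ∈ E f, ∃ w ∈ E g,
      ¬ (skeleton (fun i : {i : ι // i ≠ e} => E i.1)).Reachable u w) :
    ¬ HasEulerTour E := by
  rintro ⟨T, hsurj⟩
  obtain ⟨f, g, hf, hg, u, hu, w, hw, hunreach⟩ := hnontriv
  obtain ⟨i₀, hi₀⟩ := hsurj e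
  obtain ⟨i, rfl⟩ := hsurj f
  obtain ⟨j, rfl⟩ := hsurj g
  exact hunreach (T.reachable_of_mem_edge hi₀ i j hf hg hu hw)

/-- If `e` is a cut edge of `H` such that `H − e` has at least two
non-trivial connected components (i.e. there are edges `f, g ≠ e` lying in different
connected components of `H − e`), then `H` does not admit an Euler tour. -/
theorem stmt6 {V ι : Type} [Nonempty V] (E : ι → Finset V) (e : ι)
    (hcut : ccCount E < ccCount (fun i : {i : ι // i ≠ e} => E i.1))
    (hnontriv : ∃ (f g : ι), f ≠ e ∧ g ≠ e ∧ ∃ u ∈ E f, ∃ w ∈ E g,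
      ¬ (skeleton (fun i : {i : ι // i ≠ e} => E i.1)).Reachable u w) :
    ¬ HasEulerTour E :=
  stmt6_general E e hnontriv
end

section
/- Let H = (V,E) be a hypergraph and L a graph on vertex set E in which e and e' are adjacent whenever |e ∩ e'| ≥ 3 (i.e., L is a subgraph of the 3*-intersection graph of H). If L has a Hamilton cycle, then H admits an Euler tour. -/
/-!
List the edges of `H` in the order of the Hamilton cycle of `L` as `e₀, …, e_{n-1}`, so that
cyclically consecutive edges share at least three vertices. Choose anchors
`vᵢ ∈ eᵢ ∩ e_{i+1}` greedily, each different from its predecessor and from `v₀`; three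
candidates always leave one. Then `v₀ e₁ v₁ e₂ … v_{n-1} e₀ v₀` is a closed strict trail
through every edge exactly once.
-/

open Finset

open SimpleGraph

lemma val_nxt_of_lt {n : ℕ} {i : Fin n} (h : i.1 + 1 < n) : (nxt i).1 = i.1 + 1 :=
  Nat.mod_eq_of_lt h

lemma val_nxt_of_eq {n : ℕ} {i : Fin n} (h : i.1 + 1 = n) : (nxt i).1 = 0 := by
  simp [nxt, h]

lemma nxt_eq_add_one {m : ℕ} (i : Fin (m + 1)) : nxt i = i + 1 := by
  ext
  simp [nxt, Fin.val_add]

lemma nxt_bijective (n : ℕ) : Function.Bijective (nxt : Fin n → Fin n) := by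
  cases n with
  | zero => exact ⟨fun i => i.elim0, fun i => i.elim0⟩
  | succ m =>
    rw [show (nxt : Fin (m + 1) → Fin (m + 1)) = fun i => i + 1 from funext nxt_eq_add_one]
    exact (Equiv.addRight 1).bijective

lemma SimpleGraph.Walk.IsHamiltonianCycle.exists_bijective_adj_nxt {α : Type} [DecidableEq α]
    {G : SimpleGraph α} {a : α} {p : G.Walk a a} (hp : p.IsHamiltonianCycle) :
    ∃ n, 3 ≤ n ∧ ∃ f : Fin n → α, Function.Bijective f ∧ ∀ i, G.Adj (f i) (f (nxt i)) := by
  have hlen := hp.isCycle.three_le_length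
  refine ⟨p.length, hlen, fun i => p.getVert i, ⟨?_, ?_⟩, ?_⟩
  · intro i j hij
    exact Fin.ext (hp.isCycle.getVert_injOn' (by simp only [Set.mem_ofPred_eq]; omega)
      (by simp only [Set.mem_ofPred_eq]; omega) hij)
  · intro b
    obtain ⟨k, rfl, hk⟩ := Walk.mem_support_iff_exists_getVert.mp (hp.mem_support b)
    rcases hk.lt_or_eq with hk | rfl
    · exact ⟨⟨k, hk⟩, rfl⟩
    · exact ⟨⟨0, by omega⟩, by simp [Walk.getVert_length]⟩
  · intro i
    show G.Adj (p.getVert i) (p.getVert (nxt i))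
    have hadj := p.adj_getVert_succ i.isLt
    rcases (show i.1 + 1 ≤ _ from i.isLt).lt_or_eq with h | h
    · rwa [val_nxt_of_lt h]
    · rw [h, Walk.getVert_length] at hadj
      rwa [val_nxt_of_eq h, Walk.getVert_zero]

lemma exists_seq_mem_ne_of_three_le_card {V : Type} [DecidableEq V] (S : ℕ → Finset V)
    (hS : ∀ k, 3 ≤ #(S k)) :
    ∃ g : ℕ → V, (∀ k, g k ∈ S k) ∧ ∀ k, g (k + 1) ≠ g k ∧ g (k + 1) ≠ g 0 := by
  obtain ⟨c, hc⟩ := card_pos.mp (by linarith [hS 0] : 0 < #(S 0))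
  have avoid : ∀ k (x : V), ∃ y ∈ S (k + 1), y ≠ x ∧ y ≠ c := by
    intro k x
    obtain ⟨y, hy⟩ : (S (k + 1) \ {x, c}).Nonempty := by
      have := le_card_sdiff {x, c} (S (k + 1))
      have := card_le_two (a := x) (b := c)
      have := hS (k + 1)
      exact card_pos.mp (by omega)
    simp only [mem_sdiff, mem_insert, mem_singleton, not_or] at hy
    exact ⟨y, hy.1, hy.2⟩
  choose step hmem hne hnec using avoid
  let g : ℕ → V := fun k => Nat.rec c step k
  refine ⟨g, ?_, fun k => ⟨hne k (g k), hnec k (g k)⟩⟩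
  rintro (_ | k)
  · exact hc
  · exact hmem k (g k)

lemma exists_mem_ne_nxt_of_three_le_card {V : Type} [DecidableEq V] {n : ℕ} (hn : 2 ≤ n)
    (S : Fin n → Finset V) (hS : ∀ i, 3 ≤ #(S i)) :
    ∃ v : Fin n → V, ∀ i, v i ∈ S i ∧ v i ≠ v (nxt i) := by
  have hn0 : 0 < n := by omega
  obtain ⟨g, hmem, hne⟩ := exists_seq_mem_ne_of_three_le_card
    (fun k => S ⟨k % n, Nat.mod_lt _ hn0⟩) (fun _ => hS _)
  refine ⟨fun i => g i, fun i => ⟨by simpa [Nat.mod_eq_of_lt i.isLt] using hmem i, ?_⟩⟩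
  rcases (show i.1 + 1 ≤ _ from i.isLt).lt_or_eq with h | h
  · simpa only [val_nxt_of_lt h] using (hne i).1.symm
  · obtain ⟨k, hk⟩ : ∃ k, i.1 = k + 1 := ⟨n - 2, by omega⟩
    simpa only [val_nxt_of_eq h, hk] using (hne k).2

lemma hasEulerTour_of_bijective_inter_card {V ι : Type} [DecidableEq V] (E : ι → Finset V)
    {n : ℕ} (hn : 2 ≤ n) (f : Fin n → ι) (hf : Function.Bijective f)
    (hmeet : ∀ i, 3 ≤ #(E (f i) ∩ E (f (nxt i)))) :
    HasEulerTour E := by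
  obtain ⟨v, hv⟩ := exists_mem_ne_nxt_of_three_le_card hn _ hmeet
  have hfn := hf.comp (nxt_bijective n)
  exact ⟨⟨n, hn, v, f ∘ nxt, fun i => (mem_inter.mp (hv i).1).2,
    fun i => (mem_inter.mp (hv (nxt i)).1).1, fun i => (hv i).2, hfn.1⟩, hfn.2⟩

theorem stmt11_general {V ι : Type} [DecidableEq V] [DecidableEq ι]
    (E : ι → Finset V) (L : SimpleGraph ι)
    (hsub : ∀ e f, L.Adj e f → 3 ≤ (E e ∩ E f).card)
    (hham : ∃ (a : ι) (p : L.Walk a a), p.IsHamiltonianCycle) :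
    HasEulerTour E := by
  obtain ⟨a, p, hp⟩ := hham
  obtain ⟨n, hn, f, hf, hadj⟩ := hp.exists_bijective_adj_nxt
  exact hasEulerTour_of_bijective_inter_card E (by omega) f hf fun i => hsub _ _ (hadj i)

/-- Let `L` be a graph on the edge set of a hypergraph `H` in which
adjacency implies intersection in at least 3 vertices (so `L` is a subgraph of the
3*-intersection graph of `H`).  If `L` has a Hamilton cycle, then `H` admits an
Euler tour. -/
theorem stmt11 {V ι : Type} [Fintype ι] [DecidableEq V] [DecidableEq ι] [Nonempty V]
    (E : ι → Finset V) (L : SimpleGraph ι)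
    (hsub : ∀ e f, L.Adj e f → 3 ≤ (E e ∩ E f).card)
    (hham : ∃ (a : ι) (p : L.Walk a a), p.IsHamiltonianCycle) :
    HasEulerTour E :=
  stmt11_general E L hsub hham
end

section
/- Every r-regular r-uniform hypergraph with r ≥ 2 admits an Euler family. -/
/-!
The incidence graph of an `r`-regular `r`-uniform hypergraph is an `r`-regular bipartite graph, so
by Hall's theorem it has a perfect matching, i.e. a bijection `σ` from edges to vertices with
`σ e ∈ e`. Removing it leaves an `(r - 1)`-regular bipartite graph, which for `r ≥ 2` has a second
perfect matching `τ`, disjoint from the first. The permutation `π = τ ∘ σ⁻¹` of the vertices then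
has no fixed points, and each of its cycles `v, π v, π² v, …` is the anchor sequence of a closed
strict trail using the edges `σ⁻¹ v, σ⁻¹ (π v), …`. The cycles partition the vertices, so these
trails are anchor-disjoint and together use every edge exactly once.
-/

open Finset

theorem exists_injective_mem_of_degree_le {V ι : Type} [Fintype ι] [DecidableEq V]
    (E : ι → Finset V) {r : ℕ} (hr : 0 < r) (hcard : ∀ e, r ≤ #(E e))
    (hdegree : ∀ v, hdeg E v ≤ r) : ∃ f : ι → V, Function.Injective f ∧ ∀ e, f e ∈ E e := by
  rw [← all_card_le_biUnion_card_iff_exists_injective]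
  intro s
  refine Nat.le_of_mul_le_mul_right ?_ hr
  refine card_mul_le_card_mul (fun e v => v ∈ E e) (fun e he => ?_) (fun v _ => ?_)
  · rw [bipartiteAbove, filter_mem_eq_inter, inter_eq_right.mpr (subset_biUnion_of_mem E he)]
    exact hcard e
  · exact (card_le_card (filter_subset_filter _ (subset_univ s))).trans (hdegree v)

theorem card_eq_card_of_uniform_of_regular {V ι : Type} [Fintype ι] [Fintype V] [DecidableEq V]
    (E : ι → Finset V) {r : ℕ} (hr : 0 < r) (huniform : ∀ e, #(E e) = r)
    (hregular : ∀ v, hdeg E v = r) : Fintype.card ι = Fintype.card V := by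
  refine Nat.eq_of_mul_eq_mul_right hr ?_
  refine card_mul_eq_card_mul (fun e v => v ∈ E e) (fun e _ => ?_) (fun v _ => hregular v)
  rw [bipartiteAbove, filter_mem_eq_inter, univ_inter, huniform]

theorem hdeg_erase_of_equiv {V ι : Type} [Fintype ι] [DecidableEq V] {E : ι → Finset V}
    (σ : ι ≃ V) (hσ : ∀ e, σ e ∈ E e) (v : V) :
    hdeg (fun e => (E e).erase (σ e)) v = hdeg E v - 1 := by
  classical
  have hfilter : (univ.filter fun e => v ∈ (E e).erase (σ e)) =
      (univ.filter fun e => v ∈ E e).erase (σ.symm v) := by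
    ext e
    simp [σ.eq_symm_apply, eq_comm]
  rw [hdeg, hfilter, card_erase_of_mem (by simpa using hσ (σ.symm v)), hdeg]

theorem exists_equiv_mem_of_uniform_of_regular {V ι : Type} [Fintype ι] [Fintype V]
    [DecidableEq V] {E : ι → Finset V} {r : ℕ} (hr : 0 < r) (huniform : ∀ e, #(E e) = r)
    (hregular : ∀ v, hdeg E v = r) : ∃ σ : ι ≃ V, ∀ e, σ e ∈ E e := by
  obtain ⟨σ, hσinj, hσ⟩ := exists_injective_mem_of_degree_le E hr (fun e => (huniform e).ge)
    (fun v => (hregular v).le)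
  have hcard := card_eq_card_of_uniform_of_regular E hr huniform hregular
  exact ⟨.ofBijective σ ((Fintype.bijective_iff_injective_and_card σ).mpr ⟨hσinj, hcard⟩), hσ⟩

theorem exists_disjoint_transversals {V ι : Type} [Fintype ι] [Fintype V] [DecidableEq V]
    {E : ι → Finset V} {r : ℕ} (hr : 2 ≤ r) (huniform : ∀ e, #(E e) = r)
    (hregular : ∀ v, hdeg E v = r) :
    ∃ σ τ : ι ≃ V, (∀ e, σ e ∈ E e) ∧ (∀ e, τ e ∈ E e) ∧ ∀ e, σ e ≠ τ e := by
  obtain ⟨σ, hσ⟩ := exists_equiv_mem_of_uniform_of_regular (by omega) huniform hregular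
  obtain ⟨τ, hτ⟩ := exists_equiv_mem_of_uniform_of_regular (E := fun e => (E e).erase (σ e))
    (r := r - 1) (by omega) (fun e => by rw [card_erase_of_mem (hσ e), huniform])
    (fun v => by rw [hdeg_erase_of_equiv σ hσ, hregular])
  exact ⟨σ, τ, hσ, fun e => mem_of_mem_erase (hτ e), fun e => (ne_of_mem_erase (hτ e)).symm⟩

theorem Equiv.Perm.two_le_minimalPeriod {α : Type} [Finite α] (π : Equiv.Perm α) {x : α}
    (hx : π x ≠ x) : 2 ≤ Function.minimalPeriod π x := by
  have hpos := Function.minimalPeriod_pos_of_mem_periodicPts (π.injective.mem_periodicPts x)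
  have hne : Function.minimalPeriod π x ≠ 1 :=
    fun h => hx (Function.minimalPeriod_eq_one_iff_isFixedPt.mp h)
  omega

theorem iterate_val_nxt {α : Type} (f : α → α) (x : α) (i : Fin (Function.minimalPeriod f x)) :
    f^[(nxt i).1] x = f (f^[i] x) := by
  rw [nxt, Function.iterate_mod_minimalPeriod_eq, Function.iterate_succ_apply']

theorem hasEulerFamily_of_finite {V ι κ : Type} [Finite κ] {E : ι → Finset V} (T : κ → CST E)
    (hcover : ∀ e, ∃ k i, (T k).edge i = e)
    (hedge : ∀ k k' i i', (T k).edge i = (T k').edge i' → k = k')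
    (hvert : ∀ k k' i i', (T k).vert i = (T k').vert i' → k = k') :
    HasEulerFamily E := by
  let g := (Finite.equivFin κ).symm
  refine ⟨Nat.card κ, T ∘ g, fun e => ?_, fun k k' i i' h => g.injective (hedge _ _ i i' h),
    fun k k' i i' h => g.injective (hvert _ _ i i' h)⟩
  obtain ⟨k, i, h⟩ := hcover e
  obtain ⟨k, rfl⟩ := g.surjective k
  exact ⟨k, i, h⟩

section CycleTrails

variable {V ι : Type} {E : ι → Finset V} (σ τ : ι ≃ V)

def transversalPerm : Equiv.Perm V := σ.symm.trans τ

theorem transversalPerm_apply (v : V) : transversalPerm σ τ v = τ (σ.symm v) := rfl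

variable [Finite V] {σ τ}

noncomputable def cycleTrail (hσ : ∀ e, σ e ∈ E e) (hτ : ∀ e, τ e ∈ E e)
    (hne : ∀ e, σ e ≠ τ e) (v : V) : CST E where
  n := Function.minimalPeriod (transversalPerm σ τ) v
  hn := (transversalPerm σ τ).two_le_minimalPeriod <| by
    simpa [transversalPerm_apply] using (hne (σ.symm v)).symm
  vert i := (transversalPerm σ τ)^[i] v
  edge i := σ.symm ((transversalPerm σ τ)^[i] v)
  mem_left i := by simpa using hσ (σ.symm ((transversalPerm σ τ)^[i] v))
  mem_right i := by
    rw [iterate_val_nxt, transversalPerm_apply]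
    exact hτ _
  ne_next i := by
    rw [iterate_val_nxt, transversalPerm_apply]
    simpa using hne (σ.symm ((transversalPerm σ τ)^[i] v))
  edge_inj i j h := Fin.ext <|
    Function.iterate_injOn_Iio_minimalPeriod i.2 j.2 (σ.symm.injective h)

theorem hasEulerFamily_of_disjoint_transversals (hσ : ∀ e, σ e ∈ E e) (hτ : ∀ e, τ e ∈ E e)
    (hne : ∀ e, σ e ≠ τ e) : HasEulerFamily E := by
  let π := transversalPerm σ τ
  let T (c : Quotient (Equiv.Perm.SameCycle.setoid π)) := cycleTrail hσ hτ hne c.out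
  have hclass (c) (i : ℕ) : (⟦π^[i] c.out⟧ : Quotient (Equiv.Perm.SameCycle.setoid π)) = c := by
    conv_rhs => rw [← c.out_eq]
    exact Quotient.sound (Equiv.Perm.sameCycle_pow_left.mpr (Equiv.Perm.SameCycle.refl π _))
  have hvert (c c') (i : Fin (T c).n) (i' : Fin (T c').n) (h : (T c).vert i = (T c').vert i') :
      c = c' := by
    rw [← hclass c i, ← hclass c' i']
    exact congrArg _ h
  refine hasEulerFamily_of_finite T (fun e => ?_)
    (fun c c' i i' h => hvert c c' i i' (σ.symm.injective h)) hvert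
  let c : Quotient (Equiv.Perm.SameCycle.setoid π) := ⟦σ e⟧
  obtain ⟨n, hn⟩ := (Quotient.exact (c.out_eq) : π.SameCycle c.out (σ e)).exists_nat_pow_eq
  refine ⟨c, ⟨n % (T c).n, Nat.mod_lt _ (by have := (T c).hn; omega)⟩, ?_⟩
  show σ.symm (π^[n % Function.minimalPeriod π c.out] c.out) = e
  rw [Function.iterate_mod_minimalPeriod_eq, Equiv.Perm.iterate_eq_pow, hn, σ.symm_apply_apply]

end CycleTrails

theorem finite_of_forall_exists_mem {V ι : Type} [Finite ι] {E : ι → Finset V}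
    (hcovered : ∀ v, ∃ e, v ∈ E e) : Finite V :=
  .of_surjective (fun x : Σ e, E e => x.2.1)
    fun v => (hcovered v).elim fun e he => ⟨⟨e, v, he⟩, rfl⟩

theorem stmt15_general {V ι : Type} [Fintype ι] [DecidableEq V]
    (E : ι → Finset V) (r : ℕ) (hr : 2 ≤ r)
    (huniform : ∀ e, (E e).card = r) (hregular : ∀ v, hdeg E v = r) :
    HasEulerFamily E := by
  have hcovered (v : V) : ∃ e, v ∈ E e := by
    obtain ⟨e, he⟩ := card_pos.mp (show 0 < hdeg E v by rw [hregular]; omega)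
    exact ⟨e, (mem_filter.mp he).2⟩
  have : Finite V := finite_of_forall_exists_mem hcovered
  have := Fintype.ofFinite V
  obtain ⟨σ, τ, hσ, hτ, hne⟩ := exists_disjoint_transversals hr huniform hregular
  exact hasEulerFamily_of_disjoint_transversals hσ hτ hne

/-- Every `r`-regular `r`-uniform hypergraph with `r ≥ 2` admits an
Euler family. -/
theorem stmt15 {V ι : Type} [Fintype ι] [DecidableEq V] [Nonempty V]
    (E : ι → Finset V) (r : ℕ) (hr : 2 ≤ r)
    (huniform : ∀ e, (E e).card = r) (hregular : ∀ v, hdeg E v = r) :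
    HasEulerFamily E :=
  stmt15_general E r hr huniform hregular
end

section
/- A hypergraph admits an Euler family if and only if its edge set can be partitioned into edge sets of cycles of the hypergraph (i.e., it admits a cycle decomposition). -/
open Finset

/-!
A closed strict trail that is not a cycle repeats an anchor vertex `vᵢ = vⱼ`; cutting it there
yields two shorter closed strict trails whose edge sets partition its own, so induction on the
length decomposes every trail into cycles. Conversely, two edge-disjoint closed strict trails
sharing an anchor can both be rotated to start there and concatenated into a single one; merging
such pairs strictly decreases the number of trails, so it ends in an anchor-disjoint family.
-/

lemma apply_nxt {α : Type} {n : ℕ} {f : ℕ → α} (hf : f n = f 0) (i : Fin n) :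
    f (nxt i) = f (i + 1) := by
  change f ((i + 1) % n) = f (i + 1)
  rcases Nat.lt_or_ge (i + 1) n with h | h
  · rw [Nat.mod_eq_of_lt h]
  · rw [show (i : ℕ) + 1 = n by omega, Nat.mod_self, hf]

lemma eq_of_mod_eq_of_mem_Ico {n a s t : ℕ} (hs : s ∈ Set.Ico a (a + n))
    (ht : t ∈ Set.Ico a (a + n)) (h : s % n = t % n) : s = t := by
  wlog hst : s ≤ t generalizing s t
  · exact (this ht hs h.symm (by omega)).symm
  obtain ⟨hs₁, hs₂⟩ := hs
  obtain ⟨ht₁, ht₂⟩ := ht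
  have : t - s = 0 :=
    Nat.eq_zero_of_dvd_of_lt (Nat.dvd_of_mod_eq_zero (Nat.sub_mod_eq_zero_of_mod_eq h.symm))
      (by omega)
  omega

section

variable {V ι : Type}

def IsStep (E : ι → Finset V) (x : V) (f : ι) (y : V) : Prop :=
  x ∈ E f ∧ y ∈ E f ∧ x ≠ y

namespace CST

variable {E : ι → Finset V}

lemma n_pos (T : CST E) : 0 < T.n := by
  have := T.hn
  omega

def vertAt (T : CST E) (s : ℕ) : V := T.vert ⟨s % T.n, Nat.mod_lt _ T.n_pos⟩

def edgeAt (T : CST E) (s : ℕ) : ι := T.edge ⟨s % T.n, Nat.mod_lt _ T.n_pos⟩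

def edgeSet (T : CST E) : Set ι := Set.range T.edge

lemma vertAt_periodic (T : CST E) : Function.Periodic T.vertAt T.n := by
  intro s
  simp [vertAt]

lemma vert_eq_vertAt (T : CST E) (p : Fin T.n) : T.vert p = T.vertAt p := by
  simp [vertAt, Nat.mod_eq_of_lt p.isLt]

lemma edgeAt_mem_edgeSet (T : CST E) (s : ℕ) : T.edgeAt s ∈ T.edgeSet := ⟨_, rfl⟩

lemma isStep (T : CST E) (s : ℕ) : IsStep E (T.vertAt s) (T.edgeAt s) (T.vertAt (s + 1)) := by
  have hnxt : nxt (⟨s % T.n, Nat.mod_lt _ T.n_pos⟩ : Fin T.n) =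
      ⟨(s + 1) % T.n, Nat.mod_lt _ T.n_pos⟩ :=
    Fin.ext (Nat.mod_add_mod s T.n 1)
  refine ⟨T.mem_left _, ?_, ?_⟩
  · have := T.mem_right ⟨s % T.n, Nat.mod_lt _ T.n_pos⟩
    rw [hnxt] at this
    exact this
  · have := T.ne_next ⟨s % T.n, Nat.mod_lt _ T.n_pos⟩
    rw [hnxt] at this
    exact this

lemma injOn_edgeAt (T : CST E) (a : ℕ) : Set.InjOn T.edgeAt (Set.Ico a (a + T.n)) :=
  fun _ hs _ ht h => eq_of_mod_eq_of_mem_Ico hs ht (congrArg Fin.val (T.edge_inj h))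

lemma edgeSet_eq_image_Ico (T : CST E) (a : ℕ) :
    T.edgeSet = T.edgeAt '' Set.Ico a (a + T.n) := by
  refine Set.Subset.antisymm ?_ (Set.image_subset_iff.mpr fun s _ => T.edgeAt_mem_edgeSet s)
  rintro _ ⟨p, rfl⟩
  obtain ⟨s, hs, hsp⟩ := Finset.mem_image.mp
    (Nat.image_Ico_mod a T.n ▸ Finset.mem_range.mpr p.isLt)
  exact ⟨s, by simpa using hs, congrArg T.edge (Fin.ext hsp)⟩

def ofSeq (n : ℕ) (hn : 2 ≤ n) (v : ℕ → V) (e : ℕ → ι) (hwrap : v n = v 0)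
    (hstep : ∀ s < n, IsStep E (v s) (e s) (v (s + 1))) (hinj : Set.InjOn e (Set.Iio n)) :
    CST E where
  n := n
  hn := hn
  vert i := v i
  edge i := e i
  mem_left i := (hstep i i.isLt).1
  mem_right i := by
    rw [apply_nxt (f := v) hwrap]
    exact (hstep i i.isLt).2.1
  ne_next i := by
    rw [apply_nxt (f := v) hwrap]
    exact (hstep i i.isLt).2.2
  edge_inj i j h := Fin.ext (hinj i.isLt j.isLt h)

section ofSeq

variable {n : ℕ} {hn : 2 ≤ n} {v : ℕ → V} {e : ℕ → ι} {hwrap : v n = v 0}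
  {hstep : ∀ s < n, IsStep E (v s) (e s) (v (s + 1))} {hinj : Set.InjOn e (Set.Iio n)}

lemma vertAt_ofSeq_zero : (ofSeq n hn v e hwrap hstep hinj).vertAt 0 = v 0 := by
  simp [vertAt, ofSeq]

lemma edgeSet_ofSeq : (ofSeq n hn v e hwrap hstep hinj).edgeSet = e '' Set.Iio n := by
  simp only [edgeSet, ofSeq, ← Fin.range_val, ← Set.range_comp]
  rfl

end ofSeq

def segment (T : CST E) (a d : ℕ) (hd : 2 ≤ d) (hdn : d ≤ T.n)
    (hv : T.vertAt (a + d) = T.vertAt a) : CST E :=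
  ofSeq d hd (fun s => T.vertAt (a + s)) (fun s => T.edgeAt (a + s)) (by simpa using hv)
    (fun s _ => T.isStep (a + s))
    ((T.injOn_edgeAt a).comp (add_right_injective a).injOn
      fun s hs => by simp at hs ⊢; omega)

@[simp]
lemma n_segment (T : CST E) (a d : ℕ) (hd : 2 ≤ d) (hdn : d ≤ T.n)
    (hv : T.vertAt (a + d) = T.vertAt a) : (T.segment a d hd hdn hv).n = d := rfl

lemma edgeSet_segment (T : CST E) (a d : ℕ) (hd : 2 ≤ d) (hdn : d ≤ T.n)
    (hv : T.vertAt (a + d) = T.vertAt a) :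
    (T.segment a d hd hdn hv).edgeSet = T.edgeAt '' Set.Ico a (a + d) := by
  rw [segment, edgeSet_ofSeq]
  ext x
  constructor
  · rintro ⟨s, hs, rfl⟩
    exact ⟨a + s, by simp at hs ⊢; omega, rfl⟩
  · rintro ⟨s, hs, rfl⟩
    rw [Set.mem_Ico] at hs
    exact ⟨s - a, by simp; omega, by simp only [Nat.add_sub_cancel' hs.1]⟩

lemma exists_split (T : CST E) (hT : ¬ Function.Injective T.vert) :
    ∃ T₁ T₂ : CST E, T₁.n < T.n ∧ T₂.n < T.n ∧ Disjoint T₁.edgeSet T₂.edgeSet ∧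
      T₁.edgeSet ∪ T₂.edgeSet = T.edgeSet := by
  obtain ⟨i, j, hij, hjn, hv⟩ : ∃ i j, i < j ∧ j < T.n ∧ T.vertAt i = T.vertAt j := by
    obtain ⟨p, q, hpq, hne⟩ := Function.not_injective_iff.mp hT
    rw [T.vert_eq_vertAt, T.vert_eq_vertAt] at hpq
    rcases lt_or_gt_of_ne (Fin.val_ne_of_ne hne) with h | h
    · exact ⟨p, q, h, q.isLt, hpq⟩
    · exact ⟨q, p, h, p.isLt, hpq.symm⟩
  have hstep (s : ℕ) := (T.isStep s).2.2
  have hper := T.vertAt_periodic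
  -- Both pieces have length at least 2, since `vᵢ = vⱼ` are not cyclically consecutive.
  have h₁ : 2 ≤ j - i := by
    by_contra! h
    exact hstep i (by rw [hv, show j = i + 1 by omega])
  have h₂ : 2 ≤ T.n - (j - i) := by
    by_contra! h
    obtain ⟨rfl, rfl⟩ : i = 0 ∧ j = T.n - 1 := by omega
    exact hstep (T.n - 1) (by rw [Nat.sub_add_cancel T.n_pos, hper.eq, ← hv])
  refine ⟨T.segment i (j - i) h₁ (by omega) (by rw [Nat.add_sub_cancel' hij.le, hv]),
    T.segment j (T.n - (j - i)) h₂ (by omega)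
      (by rw [show j + (T.n - (j - i)) = i + T.n by omega, hper, hv]),
    by simp; omega, by simp; omega, ?_, ?_⟩ <;>
    rw [edgeSet_segment, edgeSet_segment, Nat.add_sub_cancel' hij.le,
      show j + (T.n - (j - i)) = i + T.n by omega]
  · rw [Set.disjoint_iff_inter_eq_empty,
      ← (T.injOn_edgeAt i).image_inter (Set.Ico_subset_Ico_right (by omega))
        (Set.Ico_subset_Ico_left (by omega)),
      Set.disjoint_iff_inter_eq_empty.mp Set.Ico_disjoint_Ico_same, Set.image_empty]
  · rw [← Set.image_union, Set.Ico_union_Ico_eq_Ico hij.le (by omega),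
      T.edgeSet_eq_image_Ico i]

def rotate (T : CST E) (a : ℕ) : CST E :=
  T.segment a T.n T.hn le_rfl (T.vertAt_periodic a)

lemma vertAt_rotate_zero (T : CST E) (a : ℕ) : (T.rotate a).vertAt 0 = T.vertAt a := by
  rw [rotate, segment, vertAt_ofSeq_zero, add_zero]

lemma edgeSet_rotate (T : CST E) (a : ℕ) : (T.rotate a).edgeSet = T.edgeSet := by
  rw [rotate, edgeSet_segment, ← edgeSet_eq_image_Ico]

section append

variable (A B : CST E)

def appendVert (s : ℕ) : V := if s < A.n then A.vertAt s else B.vertAt (s - A.n)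

def appendEdge (s : ℕ) : ι := if s < A.n then A.edgeAt s else B.edgeAt (s - A.n)

variable {A B}

lemma isStep_append (hv : A.vertAt 0 = B.vertAt 0) (s : ℕ) :
    IsStep E (appendVert A B s) (appendEdge A B s) (appendVert A B (s + 1)) := by
  unfold appendVert appendEdge
  rcases Nat.lt_trichotomy (s + 1) A.n with h | h | h
  · have hs : s < A.n := by omega
    rw [if_pos h, if_pos hs, if_pos hs]
    exact A.isStep s
  · have hs : s < A.n := by omega
    rw [if_neg h.not_lt, if_pos hs, if_pos hs, h, Nat.sub_self, ← hv, ← A.vertAt_periodic.eq,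
      ← h]
    exact A.isStep s
  · have hs : ¬s < A.n := by omega
    rw [if_neg hs, if_neg hs, if_neg (by omega), Nat.sub_add_comm (by omega)]
    exact B.isStep (s - A.n)

lemma injOn_appendEdge (hAB : Disjoint A.edgeSet B.edgeSet) :
    Set.InjOn (appendEdge A B) (Set.Iio (A.n + B.n)) := by
  intro s hs t ht h
  simp only [Set.mem_Iio, appendEdge] at hs ht h
  split_ifs at h with hsA htA htA
  · exact A.injOn_edgeAt 0 (by simp [hsA]) (by simp [htA]) h
  · exact absurd h (hAB.ne_of_mem (A.edgeAt_mem_edgeSet _) (B.edgeAt_mem_edgeSet _))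
  · exact absurd h.symm (hAB.ne_of_mem (A.edgeAt_mem_edgeSet _) (B.edgeAt_mem_edgeSet _))
  · have := B.injOn_edgeAt 0 (by simp; omega) (by simp; omega) h
    omega

def append (hv : A.vertAt 0 = B.vertAt 0) (hAB : Disjoint A.edgeSet B.edgeSet) : CST E :=
  ofSeq (A.n + B.n) (by have := A.hn; omega) (appendVert A B) (appendEdge A B)
    (by simp [appendVert, A.n_pos, B.vertAt_periodic.eq, hv])
    (fun s _ => isStep_append hv s) (injOn_appendEdge hAB)

lemma edgeSet_append (hv : A.vertAt 0 = B.vertAt 0) (hAB : Disjoint A.edgeSet B.edgeSet) :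
    (append hv hAB).edgeSet = A.edgeSet ∪ B.edgeSet := by
  rw [append, edgeSet_ofSeq, A.edgeSet_eq_image_Ico 0, B.edgeSet_eq_image_Ico 0]
  ext x
  simp only [Set.mem_image, Set.mem_Iio, Set.mem_Ico, Set.mem_union, appendEdge, zero_add]
  constructor
  · rintro ⟨s, hs, rfl⟩
    by_cases hsA : s < A.n
    · exact Or.inl ⟨s, ⟨by omega, hsA⟩, (if_pos hsA).symm⟩
    · exact Or.inr ⟨s - A.n, ⟨by omega, by omega⟩, (if_neg hsA).symm⟩
  · rintro (⟨s, hs, rfl⟩ | ⟨s, hs, rfl⟩)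
    · exact ⟨s, by omega, if_pos hs.2⟩
    · exact ⟨A.n + s, by omega, by rw [if_neg (by omega), Nat.add_sub_cancel_left]⟩

end append

lemma exists_merge (A B : CST E) {p : Fin A.n} {q : Fin B.n} (h : A.vert p = B.vert q)
    (hAB : Disjoint A.edgeSet B.edgeSet) :
    ∃ M : CST E, M.edgeSet = A.edgeSet ∪ B.edgeSet := by
  rw [← A.edgeSet_rotate p, ← B.edgeSet_rotate q] at hAB ⊢
  refine ⟨append ?_ hAB, edgeSet_append _ hAB⟩
  rwa [vertAt_rotate_zero, vertAt_rotate_zero, ← vert_eq_vertAt, ← vert_eq_vertAt]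

end CST

variable {E : ι → Finset V}

structure IsTrailPartition (F : Finset (CST E)) (S : Set ι) : Prop where
  pairwiseDisjoint : (F : Set (CST E)).PairwiseDisjoint CST.edgeSet
  biUnion_eq : ⋃ T ∈ F, T.edgeSet = S

namespace IsTrailPartition

variable {F : Finset (CST E)} {S : Set ι}

lemma edgeSet_subset (hF : IsTrailPartition F S) {T : CST E} (hT : T ∈ F) : T.edgeSet ⊆ S :=
  hF.biUnion_eq ▸ Set.subset_biUnion_of_mem (u := CST.edgeSet) hT

lemma singleton (T : CST E) : IsTrailPartition {T} T.edgeSet :=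
  ⟨by simp, by simp⟩

lemma union [DecidableEq (CST E)] {F₁ F₂ : Finset (CST E)} {S₁ S₂ : Set ι}
    (h₁ : IsTrailPartition F₁ S₁) (h₂ : IsTrailPartition F₂ S₂) (h : Disjoint S₁ S₂) :
    IsTrailPartition (F₁ ∪ F₂) (S₁ ∪ S₂) where
  pairwiseDisjoint := by
    rw [Finset.coe_union]
    exact h₁.pairwiseDisjoint.union h₂.pairwiseDisjoint fun _ hA _ hB _ =>
      h.mono (h₁.edgeSet_subset hA) (h₂.edgeSet_subset hB)
  biUnion_eq := by rw [Finset.set_biUnion_union, h₁.biUnion_eq, h₂.biUnion_eq]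

lemma biUnion [DecidableEq (CST E)] (hF : IsTrailPartition F S) {D : CST E → Finset (CST E)}
    (hD : ∀ T ∈ F, IsTrailPartition (D T) T.edgeSet) : IsTrailPartition (F.biUnion D) S where
  pairwiseDisjoint := by
    intro X hX Y hY hXY
    obtain ⟨A, hA, hXA⟩ := Finset.mem_biUnion.mp hX
    obtain ⟨B, hB, hYB⟩ := Finset.mem_biUnion.mp hY
    obtain rfl | hAB := eq_or_ne A B
    · exact (hD A hA).pairwiseDisjoint hXA hYB hXY
    · exact (hF.pairwiseDisjoint hA hB hAB).mono ((hD A hA).edgeSet_subset hXA)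
        ((hD B hB).edgeSet_subset hYB)
  biUnion_eq := by
    rw [Finset.set_biUnion_biUnion, ← hF.biUnion_eq]
    exact Set.iUnion₂_congr fun T hT => (hD T hT).biUnion_eq

lemma replace_pair [DecidableEq (CST E)] (hF : IsTrailPartition F S) {A B M : CST E}
    (hA : A ∈ F) (hB : B ∈ F) (hAB : A ≠ B) (hM : M.edgeSet = A.edgeSet ∪ B.edgeSet) :
    IsTrailPartition (insert M ((F.erase A).erase B)) S where
  pairwiseDisjoint := by
    rw [Finset.coe_insert]
    refine (hF.pairwiseDisjoint.subset ?_).insert fun C hC _ => ?_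
    · exact Finset.coe_subset.mpr ((Finset.erase_subset _ _).trans (Finset.erase_subset _ _))
    · obtain ⟨hCB, hC⟩ := Finset.mem_erase.mp hC
      obtain ⟨hCA, hC⟩ := Finset.mem_erase.mp hC
      rw [hM, Set.disjoint_union_left]
      exact ⟨hF.pairwiseDisjoint hA hC (Ne.symm hCA), hF.pairwiseDisjoint hB hC (Ne.symm hCB)⟩
  biUnion_eq := by
    have hF' : F = insert A (insert B ((F.erase A).erase B)) := by
      rw [Finset.insert_erase (Finset.mem_erase.mpr ⟨hAB.symm, hB⟩), Finset.insert_erase hA]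
    conv_rhs => rw [← hF.biUnion_eq, hF']
    simp only [Finset.set_biUnion_insert, hM, Set.union_assoc]

lemma image_univ [DecidableEq (CST E)] {m : ℕ} (C : Fin m → CST E)
    (hcov : ∀ e : ι, ∃ k i, (C k).edge i = e)
    (hdisj : ∀ k k' i i', (C k).edge i = (C k').edge i' → k = k') :
    IsTrailPartition (Finset.univ.image C) Set.univ where
  pairwiseDisjoint := by
    simp only [Finset.coe_image, Finset.coe_univ, Set.image_univ]
    rintro _ ⟨k, rfl⟩ _ ⟨k', rfl⟩ hne
    rw [Function.onFun, Set.disjoint_left]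
    rintro _ ⟨i, rfl⟩ ⟨i', hi'⟩
    exact hne (congrArg C (hdisj k' k i' i hi')).symm
  biUnion_eq := by
    refine Set.eq_univ_of_forall fun e => ?_
    obtain ⟨k, i, rfl⟩ := hcov e
    exact Set.mem_biUnion (Finset.mem_image_of_mem C (Finset.mem_univ k)) ⟨i, rfl⟩

lemma exists_fin_enum (hF : IsTrailPartition F Set.univ) :
    ∃ (m : ℕ) (C : Fin m → CST E), (∀ k, C k ∈ F) ∧ Function.Injective C ∧
      (∀ e : ι, ∃ k i, (C k).edge i = e) ∧
      (∀ k k' i i', (C k).edge i = (C k').edge i' → k = k') := by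
  let C : Fin F.card → CST E := fun k => F.equivFin.symm k
  have hC : Function.Injective C := Subtype.val_injective.comp F.equivFin.symm.injective
  refine ⟨F.card, C, fun k => (F.equivFin.symm k).2, hC, fun e => ?_, fun k k' i i' h => ?_⟩
  · obtain ⟨T, hT, i, rfl⟩ := Set.mem_iUnion₂.mp (hF.biUnion_eq ▸ Set.mem_univ e)
    obtain ⟨k, rfl⟩ : ∃ k, C k = T := ⟨F.equivFin ⟨T, hT⟩, by simp [C]⟩
    exact ⟨k, i, rfl⟩
  · by_contra hne
    exact Set.disjoint_left.mp (hF.pairwiseDisjoint (F.equivFin.symm k).2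
      (F.equivFin.symm k').2 (hC.ne hne)) ⟨i, rfl⟩ ⟨i', h.symm⟩

end IsTrailPartition

theorem CST.exists_cycle_partition (T : CST E) :
    ∃ F : Finset (CST E), (∀ C ∈ F, Function.Injective C.vert) ∧
      IsTrailPartition F T.edgeSet := by
  classical
  induction hn : T.n using Nat.strong_induction_on generalizing T with
  | _ n ih =>
  by_cases hT : Function.Injective T.vert
  · exact ⟨{T}, by simpa, .singleton T⟩
  obtain ⟨T₁, T₂, h₁, h₂, hdisj, hunion⟩ := T.exists_split hT
  obtain ⟨F₁, hF₁, hp₁⟩ := ih _ (hn ▸ h₁) T₁ rfl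
  obtain ⟨F₂, hF₂, hp₂⟩ := ih _ (hn ▸ h₂) T₂ rfl
  exact ⟨F₁ ∪ F₂, fun C hC => (Finset.mem_union.mp hC).elim (hF₁ C) (hF₂ C),
    hunion ▸ hp₁.union hp₂ hdisj⟩

theorem IsTrailPartition.exists_anchor_disjoint {F : Finset (CST E)} {S : Set ι}
    (hF : IsTrailPartition F S) :
    ∃ G : Finset (CST E), IsTrailPartition G S ∧
      ∀ A ∈ G, ∀ B ∈ G, ∀ (i : Fin A.n) (j : Fin B.n), A.vert i = B.vert j → A = B := by
  classical
  induction hc : F.card using Nat.strong_induction_on generalizing F with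
  | _ c ih =>
  by_cases h : ∀ A ∈ F, ∀ B ∈ F, ∀ (i : Fin A.n) (j : Fin B.n), A.vert i = B.vert j → A = B
  · exact ⟨F, hF, h⟩
  push Not at h
  obtain ⟨A, hA, B, hB, i, j, hij, hAB⟩ := h
  obtain ⟨M, hM⟩ := CST.exists_merge A B hij (hF.pairwiseDisjoint hA hB hAB)
  refine ih _ ?_ (hF.replace_pair hA hB hAB hM) rfl
  have : 1 < F.card := Finset.one_lt_card.mpr ⟨A, hA, B, hB, hAB⟩
  refine (Finset.card_insert_le _ _).trans_lt ?_
  rw [Finset.card_erase_of_mem (Finset.mem_erase.mpr ⟨hAB.symm, hB⟩),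
    Finset.card_erase_of_mem hA]
  omega

end

theorem stmt18_general {V ι : Type} (E : ι → Finset V) :
    HasEulerFamily E ↔
      ∃ (m : ℕ) (C : Fin m → CST E),
        (∀ k, Function.Injective (C k).vert) ∧
        (∀ e : ι, ∃ k i, (C k).edge i = e) ∧
        (∀ k k' i i', (C k).edge i = (C k').edge i' → k = k') := by
  classical
  constructor
  · rintro ⟨m, T, hcov, hedge, -⟩
    choose D hDcyc hD using fun A : CST E => A.exists_cycle_partition
    obtain ⟨m', C, hCF, -, hcov', hedge'⟩ :=
      ((IsTrailPartition.image_univ T hcov hedge).biUnion fun A _ => hD A).exists_fin_enum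
    refine ⟨m', C, fun k => ?_, hcov', hedge'⟩
    obtain ⟨A, -, hA⟩ := Finset.mem_biUnion.mp (hCF k)
    exact hDcyc A _ hA
  · rintro ⟨m, C, -, hcov, hedge⟩
    obtain ⟨G, hG, hanchor⟩ := (IsTrailPartition.image_univ C hcov hedge).exists_anchor_disjoint
    obtain ⟨m', T, hTG, hinj, hcov', hedge'⟩ := hG.exists_fin_enum
    exact ⟨m', T, hcov', hedge', fun k k' i i' h => hinj (hanchor _ (hTG k) _ (hTG k') i i' h)⟩

/-- A hypergraph admits an Euler family if and only if it admits a
cycle decomposition: a finite family of cycles (closed strict trails with pairwise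
distinct anchor vertices) such that every edge lies in exactly one cycle. -/
theorem stmt18 {V ι : Type} [Nonempty V] (E : ι → Finset V) :
    HasEulerFamily E ↔
      ∃ (m : ℕ) (C : Fin m → CST E),
        (∀ k, Function.Injective (C k).vert) ∧
        (∀ e : ι, ∃ k i, (C k).edge i = e) ∧
        (∀ k k' i i', (C k).edge i = (C k').edge i' → k = k') :=
  stmt18_general E
end

section
/- Let H = (V,E) be a nonempty hypergraph without empty edges such that every edge has even cardinality, and let H^T be its dual. If F = (V,E') with E' ⊆ E is a 2-factor of H (a spanning hypersubgraph in which every vertex has degree exactly 2), then H^T admits an Euler family whose set of anchor vertices is exactly E' and which traverses every vertex e ∈ E' exactly |e|/2 times. -/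
/-!
Every vertex `v` of `H` lies in exactly two edges of the 2-factor `E'`, so it can be read as an edge
joining them in a loopless multigraph `G` on `E'`, in which `e ∈ E'` has the even degree `|e|`.
A closed trail of `G` is a closed strict trail of the dual `H^T`, and it passes through each of its
anchors half as often as that anchor's degree within the trail. So it suffices to split the edges of
`G` into closed trails with pairwise disjoint anchor sets. Take a longest closed trail `C`: removing
its edges keeps all degrees even, and no remaining edge touches an anchor of `C`, since a closed
trail of the remaining edges through such an anchor could be spliced into `C`. Recurse.
-/

open Finset

/-- The dual of the hypergraph `E : ι → Finset V`: its vertices are the edges of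
`E`, and its edges are `v^T = {e : v ∈ e}` for `v ∈ V`. -/
def dualH {V ι : Type} [Fintype ι] [DecidableEq V] (E : ι → Finset V) :
    V → Finset ι :=
  fun v => Finset.univ.filter fun e => v ∈ E e

theorem exists_forall_le_of_bdd {X : Type*} [Nonempty X] (f : X → ℕ) {B : ℕ}
    (hB : ∀ x, f x ≤ B) : ∃ x, ∀ y, f y ≤ f x := by
  have hbdd : BddAbove (Set.range f) := ⟨B, Set.forall_mem_range.2 hB⟩
  obtain ⟨x, hx⟩ := Nat.sSup_mem (Set.range_nonempty f) hbdd
  exact ⟨x, fun y => hx ▸ le_csSup hbdd ⟨y, rfl⟩⟩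

open Function in
theorem Pairwise.fin_cons {X : Type*} {r : X → X → Prop} (hr : ∀ x y, r x y → r y x)
    {m : ℕ} {x : X} {f : Fin m → X} (hx : ∀ k, r x (f k)) (hf : Pairwise (r on f)) :
    Pairwise (r on (Fin.cons x f : Fin (m + 1) → X)) := by
  intro i j hij
  induction i using Fin.cases <;> induction j using Fin.cases <;>
    simp only [onFun, Fin.cons_zero, Fin.cons_succ]
  · exact absurd rfl hij
  · exact hx _
  · exact hr _ _ (hx _)
  · exact hf (ne_of_apply_ne Fin.succ hij)

theorem Fin.card_filter_univ_eq_count (p : ℕ → Prop) [DecidablePred p] (n : ℕ) :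
    #{i : Fin n | p i} = Nat.count p n := by
  rw [card_filter, Fin.sum_univ_eq_sum_range (fun i => if p i then 1 else 0), ← card_filter,
    Nat.count_eq_card_filter_range]

namespace Multigraph

variable {α β : Type*} [DecidableEq α] {ends : β → Finset α} {S S' : Finset β} {a : α}

def degree (ends : β → Finset α) (S : Finset β) (a : α) : ℕ := #{b ∈ S | a ∈ ends b}

theorem degree_pos {b : β} (hb : b ∈ S) (ha : a ∈ ends b) : 0 < degree ends S a :=
  card_pos.2 ⟨b, mem_filter.2 ⟨hb, ha⟩⟩

structure Trail (ends : β → Finset α) (S : Finset β) where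
  n : ℕ
  vert : ℕ → α
  edge : ℕ → β
  edge_mem : ∀ i < n, edge i ∈ S
  ends_edge : ∀ i < n, ends (edge i) = {vert i, vert (i + 1)}
  injOn_edge : Set.InjOn edge (Set.Iio n)

namespace Trail

variable (T : Trail ends S)

def mono (h : S ⊆ S') : Trail ends S' :=
  { T with edge_mem := fun i hi => h (T.edge_mem i hi) }

theorem mem_ends_edge {i : ℕ} (hi : i < T.n) : T.vert i ∈ ends (T.edge i) := by
  simp [T.ends_edge i hi]

theorem vert_ne_vert_succ (hends : ∀ b, #(ends b) = 2) {i : ℕ} (hi : i < T.n) :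
    T.vert i ≠ T.vert (i + 1) := by
  intro h
  simpa [T.ends_edge i hi, h] using hends (T.edge i)

end Trail

/-- The anchors are `vert 0, …, vert (n - 1)`; the endpoint `vert n` repeats `vert 0`. -/
structure ClosedTrail (ends : β → Finset α) (S : Finset β) extends Trail ends S where
  vert_n : vert n = vert 0
  two_le : 2 ≤ n

namespace ClosedTrail

variable (C : ClosedTrail ends S)

def mono (h : S ⊆ S') : ClosedTrail ends S' :=
  { C.toTrail.mono h with vert_n := C.vert_n, two_le := C.two_le }

def visits (a : α) : ℕ := Nat.count (C.vert · = a) C.n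

def anchors : Finset α := (range C.n).image C.vert

theorem length_pos : 0 < C.n := lt_of_lt_of_le two_pos C.two_le

theorem degree_pos_of_mem_anchors (ha : a ∈ C.anchors) : 0 < degree ends S a := by
  obtain ⟨i, hi, rfl⟩ := mem_image.1 ha
  exact degree_pos (C.edge_mem i (mem_range.1 hi)) (C.mem_ends_edge (mem_range.1 hi))

theorem vert_add_one_mod (k : ℕ) : C.vert ((k + 1) % C.n) = C.vert (k % C.n + 1) := by
  have hk := Nat.mod_lt k C.length_pos
  rw [← Nat.mod_add_mod]
  rcases (show k % C.n + 1 < C.n ∨ k % C.n + 1 = C.n by omega) with h | h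
  · rw [Nat.mod_eq_of_lt h]
  · rw [h, Nat.mod_self, C.vert_n]

def rotate (j : ℕ) : ClosedTrail ends S where
  n := C.n
  vert i := C.vert ((i + j) % C.n)
  edge i := C.edge ((i + j) % C.n)
  edge_mem i _ := C.edge_mem _ (Nat.mod_lt _ C.length_pos)
  ends_edge i _ := by
    rw [C.ends_edge _ (Nat.mod_lt _ C.length_pos), add_right_comm, C.vert_add_one_mod]
  injOn_edge i hi i' hi' h := by
    have h' : i ≡ i' [MOD C.n] :=
      Nat.ModEq.add_right_cancel' j (C.injOn_edge (Nat.mod_lt _ C.length_pos)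
        (Nat.mod_lt _ C.length_pos) h)
    rwa [Nat.ModEq, Nat.mod_eq_of_lt hi, Nat.mod_eq_of_lt hi'] at h'
  vert_n := by simp
  two_le := C.two_le

theorem rotate_vert_zero {j : ℕ} (hj : j < C.n) : (C.rotate j).vert 0 = C.vert j := by
  simp [rotate, Nat.mod_eq_of_lt hj]

end ClosedTrail

variable [DecidableEq β]

theorem degree_add_degree_sdiff (h : S' ⊆ S) (a : α) :
    degree ends S' a + degree ends (S \ S') a = degree ends S a := by
  rw [degree, degree, degree, ← card_union_of_disjoint
    (disjoint_filter_filter disjoint_sdiff), ← filter_union, union_sdiff_of_subset h]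

theorem degree_mono (h : S' ⊆ S) (a : α) : degree ends S' a ≤ degree ends S a :=
  (degree_add_degree_sdiff h a).symm ▸ Nat.le_add_right _ _

namespace Trail

variable (T : Trail ends S)

def edges : Finset β := (range T.n).image T.edge

@[simp]
theorem mem_edges {b : β} : b ∈ T.edges ↔ ∃ i < T.n, T.edge i = b := by
  simp [edges]

theorem edges_subset : T.edges ⊆ S := by
  intro b hb
  obtain ⟨i, hi, rfl⟩ := T.mem_edges.1 hb
  exact T.edge_mem i hi

theorem length_le_card : T.n ≤ #S := by
  simpa [edges, card_image_of_injOn (coe_range T.n ▸ T.injOn_edge)] using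
    card_le_card T.edges_subset

theorem degree_edges (a : α) :
    degree ends T.edges a = Nat.count (fun i => a ∈ ends (T.edge i)) T.n := by
  rw [degree, edges, filter_image, card_image_of_injOn, Nat.count_eq_card_filter_range]
  exact T.injOn_edge.mono fun _ h => mem_range.1 (mem_filter.1 h).1

theorem degree_edges_add_ite (hends : ∀ b, #(ends b) = 2) (a : α) :
    degree ends T.edges a + (if T.vert 0 = a then 1 else 0) =
      2 * Nat.count (T.vert · = a) T.n + (if T.vert T.n = a then 1 else 0) := by
  rw [degree_edges]
  suffices ∀ k ≤ T.n, Nat.count (fun i => a ∈ ends (T.edge i)) k +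
      (if T.vert 0 = a then 1 else 0) =
      2 * Nat.count (T.vert · = a) k + (if T.vert k = a then 1 else 0) from this T.n le_rfl
  intro k hk
  induction k with
  | zero => simp
  | succ k ih =>
    have hk : k < T.n := hk
    have hstep : (if a ∈ ends (T.edge k) then 1 else 0) =
        (if T.vert k = a then 1 else 0) + (if T.vert (k + 1) = a then 1 else 0) := by
      have hne := T.vert_ne_vert_succ hends hk
      rw [T.ends_edge k hk]
      by_cases h : T.vert k = a <;> by_cases h' : T.vert (k + 1) = a <;> simp_all [eq_comm]
    rw [Nat.count_succ, Nat.count_succ, hstep]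
    have := ih hk.le
    omega

def snoc {b : β} {c : α} (hb : b ∈ S) (hbT : b ∉ T.edges) (hc : ends b = {T.vert T.n, c}) :
    Trail ends S where
  n := T.n + 1
  vert := Function.update T.vert (T.n + 1) c
  edge := Function.update T.edge T.n b
  edge_mem i hi := by
    rcases Nat.lt_succ_iff_lt_or_eq.1 hi with hi | rfl
    · rw [Function.update_of_ne hi.ne]
      exact T.edge_mem i hi
    · rwa [Function.update_self]
  ends_edge i hi := by
    rcases Nat.lt_succ_iff_lt_or_eq.1 hi with hi | rfl
    · rw [Function.update_of_ne hi.ne, Function.update_of_ne (by omega : i ≠ T.n + 1),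
        Function.update_of_ne (by omega : i + 1 ≠ T.n + 1)]
      exact T.ends_edge i hi
    · simp [hc]
  injOn_edge i hi j hj h := by
    simp only [Set.mem_Iio] at hi hj
    rcases Nat.lt_succ_iff_lt_or_eq.1 hi with hi | rfl <;>
      rcases Nat.lt_succ_iff_lt_or_eq.1 hj with hj | rfl
    · simp only [Function.update_of_ne hi.ne, Function.update_of_ne hj.ne] at h
      exact T.injOn_edge hi hj h
    · simp only [Function.update_of_ne hi.ne, Function.update_self] at h
      exact absurd (T.mem_edges.2 ⟨i, hi, h⟩) hbT
    · simp only [Function.update_of_ne hj.ne, Function.update_self] at h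
      exact absurd (T.mem_edges.2 ⟨j, hj, h.symm⟩) hbT
    · rfl

theorem exists_extension (hends : ∀ b, #(ends b) = 2)
    (h : degree ends T.edges (T.vert T.n) < degree ends S (T.vert T.n)) :
    ∃ U : Trail ends S, U.n = T.n + 1 ∧ U.vert 0 = T.vert 0 := by
  rw [← degree_add_degree_sdiff T.edges_subset] at h
  obtain ⟨b, hb⟩ := card_pos.1 (Nat.pos_of_lt_add_right h)
  rw [mem_filter, mem_sdiff] at hb
  obtain ⟨⟨hbS, hbT⟩, hv⟩ := hb
  obtain ⟨c, hc⟩ :=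
    card_eq_one.1 (by rw [card_erase_of_mem hv, hends] : #((ends b).erase _) = 1)
  exact ⟨T.snoc hbS hbT (by rw [← hc, insert_erase hv]), rfl, by simp [snoc]⟩

def append (T U : Trail ends S) (h : U.vert 0 = T.vert T.n)
    (hdisj : Disjoint T.edges U.edges) : Trail ends S where
  n := T.n + U.n
  vert i := if i ≤ T.n then T.vert i else U.vert (i - T.n)
  edge i := if i < T.n then T.edge i else U.edge (i - T.n)
  edge_mem i hi := by
    split_ifs with hiT
    exacts [T.edge_mem i hiT, U.edge_mem _ (by omega)]
  ends_edge i hi := by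
    by_cases hiT : i < T.n
    · rw [if_pos hiT, if_pos hiT.le, if_pos (show i + 1 ≤ T.n by omega)]
      exact T.ends_edge i hiT
    · rw [if_neg hiT, if_neg (show ¬i + 1 ≤ T.n by omega), U.ends_edge _ (by omega),
        show i + 1 - T.n = i - T.n + 1 by omega]
      split_ifs with hiT'
      · obtain rfl : i = T.n := by omega
        rw [Nat.sub_self, h]
      · rfl
  injOn_edge i hi i' hi' h := by
    simp only [Set.mem_Iio] at hi hi'
    by_cases hiT : i < T.n <;> by_cases hiT' : i' < T.n <;> simp only [hiT, hiT', if_true,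
      if_false] at h
    · exact T.injOn_edge hiT hiT' h
    · exact absurd hdisj (not_disjoint_iff.2
        ⟨_, T.mem_edges.2 ⟨i, hiT, rfl⟩, U.mem_edges.2 ⟨i' - T.n, by omega, h.symm⟩⟩)
    · exact absurd hdisj (not_disjoint_iff.2
        ⟨_, T.mem_edges.2 ⟨i', hiT', rfl⟩, U.mem_edges.2 ⟨i - T.n, by omega, h⟩⟩)
    · have := U.injOn_edge (show i - T.n < U.n by omega) (show i' - T.n < U.n by omega) h
      omega

end Trail

namespace ClosedTrail

variable (C : ClosedTrail ends S)

def append (D : ClosedTrail ends S) (h : D.vert 0 = C.vert 0)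
    (hdisj : Disjoint C.edges D.edges) : ClosedTrail ends S :=
  { C.toTrail.append D.toTrail (h.trans C.vert_n.symm) hdisj with
    vert_n := by
      simp only [Trail.append, if_neg (show ¬C.n + D.n ≤ C.n by have := D.two_le; omega),
        Nat.add_sub_cancel_left, D.vert_n, h, Nat.zero_le, if_true]
    two_le := C.two_le.trans (Nat.le_add_right _ _) }

theorem edges_rotate_subset (j : ℕ) : (C.rotate j).edges ⊆ C.edges := by
  intro b hb
  obtain ⟨i, -, rfl⟩ := (C.rotate j).mem_edges.1 hb
  exact C.mem_edges.2 ⟨_, Nat.mod_lt _ C.length_pos, rfl⟩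

theorem two_mul_visits (hends : ∀ b, #(ends b) = 2) (a : α) :
    2 * C.visits a = degree ends C.edges a := by
  have := C.degree_edges_add_ite hends a
  rw [C.vert_n] at this
  rw [visits]
  omega

theorem sdiff_edges_ssubset : S \ C.edges ⊂ S :=
  sdiff_ssubset C.edges_subset ⟨C.edge 0, C.mem_edges.2 ⟨0, C.length_pos, rfl⟩⟩

variable {C}

/-- A longest trail from `a` has used every edge at its endpoint, so by parity it ends at `a`. -/
theorem exists_vert_zero_eq (hends : ∀ b, #(ends b) = 2) (heven : ∀ a, Even (degree ends S a))
    (ha : 0 < degree ends S a) : ∃ C : ClosedTrail ends S, C.vert 0 = a := by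
  obtain ⟨b, -⟩ := card_pos.1 ha
  have : Nonempty {T : Trail ends S // T.vert 0 = a} :=
    ⟨⟨⟨0, fun _ => a, fun _ => b, by simp, by simp, by simp⟩, rfl⟩⟩
  obtain ⟨⟨T, hTa⟩, hT⟩ := exists_forall_le_of_bdd
    (fun T : {T : Trail ends S // T.vert 0 = a} => T.1.n) fun T => T.1.length_le_card
  have hfull : degree ends T.edges (T.vert T.n) = degree ends S (T.vert T.n) := by
    refine (degree_mono T.edges_subset _).antisymm (not_lt.1 fun h => ?_)
    obtain ⟨U, hU, hU0⟩ := T.exists_extension hends h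
    have : U.n ≤ T.n := hT ⟨U, hU0.trans hTa⟩
    omega
  have hclosed : T.vert T.n = T.vert 0 := by
    have hpar := T.degree_edges_add_ite hends (T.vert T.n)
    obtain ⟨k, hk⟩ := heven (T.vert T.n)
    by_contra h
    rw [hfull, if_pos rfl, if_neg (Ne.symm h)] at hpar
    omega
  have hpos : T.n ≠ 0 := by
    intro h0
    have := hfull
    rw [T.degree_edges, h0, Nat.count_zero, hTa] at this
    omega
  have hne1 : T.n ≠ 1 := by
    intro h1
    exact T.vert_ne_vert_succ hends (i := 0) (by omega) (by rw [zero_add, ← h1, hclosed])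
  exact ⟨⟨T, hclosed, by omega⟩, hTa⟩

theorem exists_forall_length_le (hends : ∀ b, #(ends b) = 2)
    (heven : ∀ a, Even (degree ends S a)) (hS : S.Nonempty) :
    ∃ C : ClosedTrail ends S, ∀ D : ClosedTrail ends S, D.n ≤ C.n := by
  obtain ⟨b, hb⟩ := hS
  obtain ⟨a, ha⟩ := card_pos.1 (by rw [hends b]; norm_num : 0 < #(ends b))
  obtain ⟨C, -⟩ := exists_vert_zero_eq hends heven (degree_pos hb ha)
  have : Nonempty (ClosedTrail ends S) := ⟨C⟩
  exact exists_forall_le_of_bdd (fun C : ClosedTrail ends S => C.n) fun C => C.length_le_card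

theorem even_degree_sdiff_edges (hends : ∀ b, #(ends b) = 2)
    (heven : ∀ a, Even (degree ends S a)) (C : ClosedTrail ends S) (a : α) :
    Even (degree ends (S \ C.edges) a) := by
  have := heven a
  rw [← degree_add_degree_sdiff C.edges_subset, ← C.two_mul_visits hends] at this
  exact (Nat.even_add.1 this).1 (even_two_mul _)

/-- Otherwise a closed trail of the remaining edges through `a`, appended to `C` rotated to start
at `a`, would be a longer closed trail. -/
theorem degree_sdiff_edges_eq_zero_of_mem_anchors (hends : ∀ b, #(ends b) = 2)
    (heven : ∀ a, Even (degree ends S a)) (hC : ∀ D : ClosedTrail ends S, D.n ≤ C.n)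
    (ha : a ∈ C.anchors) : degree ends (S \ C.edges) a = 0 := by
  obtain ⟨j, hj, rfl⟩ := mem_image.1 ha
  rw [mem_range] at hj
  by_contra h
  obtain ⟨D, hD⟩ := exists_vert_zero_eq hends (even_degree_sdiff_edges hends heven C)
    (Nat.pos_of_ne_zero h)
  have hdisj : Disjoint (C.rotate j).edges (D.mono sdiff_subset).edges :=
    disjoint_of_subset_left (C.edges_rotate_subset j)
      (disjoint_of_subset_right D.edges_subset disjoint_sdiff)
  have hlonger : C.n + D.n ≤ C.n :=
    hC ((C.rotate j).append (D.mono sdiff_subset) (hD.trans (C.rotate_vert_zero hj).symm) hdisj)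
  have := D.two_le
  omega

end ClosedTrail

variable {m : ℕ}

structure IsEulerFamily (T : Fin m → ClosedTrail ends S) : Prop where
  exists_mem_edges : ∀ b ∈ S, ∃ k, b ∈ (T k).edges
  pairwise_disjoint_edges : Pairwise fun k k' => Disjoint (T k).edges (T k').edges
  pairwise_disjoint_anchors : Pairwise fun k k' => Disjoint (T k).anchors (T k').anchors

namespace IsEulerFamily

variable {T : Fin m → ClosedTrail ends S}

theorem eq_of_edge_eq (hT : IsEulerFamily T) {k k' : Fin m} {i i' : ℕ} (hi : i < (T k).n)
    (hi' : i' < (T k').n) (h : (T k).edge i = (T k').edge i') : k = k' := by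
  by_contra hne
  exact disjoint_left.1 (hT.pairwise_disjoint_edges hne) ((T k).mem_edges.2 ⟨i, hi, rfl⟩)
    ((T k').mem_edges.2 ⟨i', hi', h.symm⟩)

theorem eq_of_vert_eq (hT : IsEulerFamily T) {k k' : Fin m} {i i' : ℕ} (hi : i < (T k).n)
    (hi' : i' < (T k').n) (h : (T k).vert i = (T k').vert i') : k = k' := by
  by_contra hne
  exact disjoint_left.1 (hT.pairwise_disjoint_anchors hne)
    (mem_image.2 ⟨i, mem_range.2 hi, rfl⟩) (mem_image.2 ⟨i', mem_range.2 hi', h.symm⟩)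

theorem two_mul_sum_visits (hT : IsEulerFamily T) (hends : ∀ b, #(ends b) = 2) (a : α) :
    2 * ∑ k, (T k).visits a = degree ends S a := by
  have hS : S = univ.biUnion fun k => (T k).edges :=
    Subset.antisymm (fun b hb => by simpa using hT.exists_mem_edges b hb)
      (biUnion_subset.2 fun k _ => (T k).edges_subset)
  rw [congrArg (degree ends · a) hS, degree, filter_biUnion, card_biUnion, mul_sum]
  · exact sum_congr rfl fun k _ => (T k).two_mul_visits hends a
  · exact fun k _ k' _ hk => disjoint_filter_filter (hT.pairwise_disjoint_edges hk)

theorem cons {C : ClosedTrail ends S} {T : Fin m → ClosedTrail ends (S \ C.edges)}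
    (hT : IsEulerFamily T) (hC : ∀ a ∈ C.anchors, degree ends (S \ C.edges) a = 0) :
    IsEulerFamily (Fin.cons C fun k => (T k).mono sdiff_subset : Fin (m + 1) → _) where
  exists_mem_edges b hb := by
    by_cases hbC : b ∈ C.edges
    · exact ⟨0, hbC⟩
    · obtain ⟨k, hk⟩ := hT.exists_mem_edges b (mem_sdiff.2 ⟨hb, hbC⟩)
      exact ⟨k.succ, hk⟩
  pairwise_disjoint_edges :=
    Pairwise.fin_cons (r := fun C D : ClosedTrail ends S => Disjoint C.edges D.edges)
      (fun _ _ h => h.symm) (fun k => disjoint_of_subset_right (T k).edges_subset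
        disjoint_sdiff) hT.pairwise_disjoint_edges
  pairwise_disjoint_anchors :=
    Pairwise.fin_cons (r := fun C D : ClosedTrail ends S => Disjoint C.anchors D.anchors)
      (fun _ _ h => h.symm) (fun k => disjoint_left.2 fun a ha ha' =>
        ((T k).degree_pos_of_mem_anchors ha').ne' (hC a ha)) hT.pairwise_disjoint_anchors

end IsEulerFamily

theorem exists_isEulerFamily (hends : ∀ b, #(ends b) = 2)
    (heven : ∀ a, Even (degree ends S a)) :
    ∃ (m : ℕ) (T : Fin m → ClosedTrail ends S), IsEulerFamily T := by
  induction S using Finset.strongInduction with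
  | H S ih =>
    rcases S.eq_empty_or_nonempty with rfl | hS
    · exact ⟨0, Fin.elim0, ⟨by simp, fun k => k.elim0, fun k => k.elim0⟩⟩
    obtain ⟨C, hC⟩ := ClosedTrail.exists_forall_length_le hends heven hS
    obtain ⟨m, T, hT⟩ := ih _ C.sdiff_edges_ssubset (C.even_degree_sdiff_edges hends heven)
    exact ⟨m + 1, _, hT.cons fun a ha =>
      ClosedTrail.degree_sdiff_edges_eq_zero_of_mem_anchors hends heven hC ha⟩

end Multigraph

def Multigraph.ClosedTrail.toCST {α β : Type} [DecidableEq α] {ends : β → Finset α}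
    {S : Finset β} {F : β → Finset α} (C : ClosedTrail ends S) (hends : ∀ b, #(ends b) = 2)
    (hF : ∀ b, ends b ⊆ F b) : CST F where
  n := C.n
  hn := C.two_le
  vert i := C.vert i
  edge i := C.edge i
  mem_left i := hF _ (C.mem_ends_edge i.2)
  mem_right i := by
    rw [nxt, C.vert_add_one_mod, Nat.mod_eq_of_lt i.2]
    exact hF _ (by simp [C.ends_edge i i.2])
  ne_next i := by
    rw [nxt, C.vert_add_one_mod, Nat.mod_eq_of_lt i.2]
    exact C.vert_ne_vert_succ hends i.2
  edge_inj i j h := Fin.ext (C.injOn_edge i.2 j.2 h)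

theorem stmt19_general {V ι : Type} [Fintype V] [Fintype ι] [DecidableEq V] [DecidableEq ι]
    (E : ι → Finset V) (heven : ∀ e, Even (E e).card)
    (E' : Finset ι) (h2f : ∀ v : V, (E'.filter fun e => v ∈ E e).card = 2) :
    ∃ (m : ℕ) (T : Fin m → CST (dualH E)),
      (∀ v : V, ∃ k i, (T k).edge i = v) ∧
      (∀ k k' i i', (T k).edge i = (T k').edge i' → k = k') ∧
      (∀ k k' i i', (T k).vert i = (T k').vert i' → k = k') ∧
      (∀ e : ι, (∑ k, (Finset.univ.filter fun i => (T k).vert i = e).card) =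
        if e ∈ E' then (E e).card / 2 else 0) := by
  set ends : V → Finset ι := fun v => {e ∈ E' | v ∈ E e}
  have hdeg (e : ι) : Multigraph.degree ends univ e = if e ∈ E' then #(E e) else 0 := by
    split_ifs with he <;> simp [Multigraph.degree, ends, he]
  obtain ⟨m, T, hT⟩ := Multigraph.exists_isEulerFamily (S := univ) h2f fun e => by
    rw [hdeg]
    split_ifs
    exacts [heven e, .zero]
  refine ⟨m, fun k => (T k).toCST h2f fun v => filter_subset_filter _ (subset_univ E'),
    fun v => ?_, fun k k' i i' h => hT.eq_of_edge_eq i.2 i'.2 h,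
    fun k k' i i' h => hT.eq_of_vert_eq i.2 i'.2 h, fun e => ?_⟩
  · obtain ⟨k, hk⟩ := hT.exists_mem_edges v (mem_univ v)
    obtain ⟨i, hi, rfl⟩ := (T k).mem_edges.1 hk
    exact ⟨k, ⟨i, hi⟩, rfl⟩
  · have hcount (k : Fin m) : #{i : Fin (T k).n | (T k).vert i = e} = (T k).visits e :=
      Fin.card_filter_univ_eq_count (fun j => (T k).vert j = e) _
    have := hT.two_mul_sum_visits h2f e
    rw [hdeg] at this
    change ∑ k, #{i : Fin (T k).n | (T k).vert i = e} = _
    rw [sum_congr rfl fun k _ => hcount k]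
    split_ifs at this ⊢ <;> omega

/-- Let `H = (V,E)` be a nonempty hypergraph without empty edges in
which every edge has even cardinality.  If `(V, E')` is a 2-factor of `H` (every
vertex lies in exactly two edges of `E'`), then the dual `H^T` admits an Euler
family whose set of anchor vertices is exactly `E'`, traversing each anchor
`e ∈ E'` exactly `|e|/2` times (and each `e ∉ E'` zero times). -/
theorem stmt19 {V ι : Type} [Fintype V] [Fintype ι] [DecidableEq V] [DecidableEq ι]
    [Nonempty V] [Nonempty ι] (E : ι → Finset V)
    (hne : ∀ e, (E e).Nonempty) (heven : ∀ e, Even (E e).card)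
    (E' : Finset ι) (h2f : ∀ v : V, (E'.filter fun e => v ∈ E e).card = 2) :
    ∃ (m : ℕ) (T : Fin m → CST (dualH E)),
      (∀ v : V, ∃ k i, (T k).edge i = v) ∧
      (∀ k k' i i', (T k).edge i = (T k').edge i' → k = k') ∧
      (∀ k k' i i', (T k).vert i = (T k').vert i' → k = k') ∧
      (∀ e : ι, (∑ k, (Finset.univ.filter fun i => (T k).vert i = e).card) =
        if e ∈ E' then (E e).card / 2 else 0) :=
  stmt19_general E heven E' h2f
end
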